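/- arXiv:1506.04546 — 7 statements merged into one kernel-verified Lean document; each statement's English description precedes it below -/
import Mathlib

section
/- For every real number α ∈ [0,1] there exists a completely multiplicative function a : ℕ → ℂ such that the Dirichlet series f(s) = Σ_{n=1}^∞ a_n n^{-s} satisfies σ_a(f) − σ_c(f) = α (in particular both abscissas are finite). -/
open Filter Topology

/-- `N`-th partial sum of the Dirichlet series `∑ a_n n^{-s}` at the point `s`. -/
noncomputable def dirichletPartial (a : ℕ → ℂ) (s : ℂ) (N : ℕ) : ℂ :=
  ∑ n ∈ Finset.range N, a (n + 1) / ((n : ℂ) + 1) ^ s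

/-- The Dirichlet series `∑ a_n n^{-σ}` converges (as a limit of partial sums). -/
def DirichletConvergesAt (a : ℕ → ℂ) (σ : ℝ) : Prop :=
  ∃ l : ℂ, Tendsto (dirichletPartial a (σ : ℂ)) atTop (𝓝 l)

/-- The series `∑ a_n n^{-σ - it}` converges uniformly in `t ∈ ℝ`. -/
def DirichletConvergesUniformlyAt (a : ℕ → ℂ) (σ : ℝ) : Prop :=
  ∃ g : ℝ → ℂ,
    TendstoUniformly (fun N (t : ℝ) => dirichletPartial a ((σ : ℂ) + (t : ℂ) * Complex.I) N) g atTop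

/-- The series `∑ |a_n| n^{-σ}` converges. -/
def DirichletAbsConvergesAt (a : ℕ → ℂ) (σ : ℝ) : Prop :=
  Summable fun n : ℕ => ‖a (n + 1)‖ / ((n : ℝ) + 1) ^ σ

/-- Abscissa of (simple) convergence. -/
noncomputable def sigmaC (a : ℕ → ℂ) : ℝ := sInf {σ : ℝ | DirichletConvergesAt a σ}

/-- Abscissa of uniform convergence. -/
noncomputable def sigmaB (a : ℕ → ℂ) : ℝ := sInf {σ : ℝ | DirichletConvergesUniformlyAt a σ}

/-- Abscissa of absolute convergence. -/
noncomputable def sigmaA (a : ℕ → ℂ) : ℝ := sInf {σ : ℝ | DirichletAbsConvergesAt a σ}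

/-- `a : ℕ → ℂ` is multiplicative: `a 1 = 1` and `a (m n) = a m * a n` for coprime `m, n ≥ 1`. -/
def IsMultiplicativeFun (a : ℕ → ℂ) : Prop :=
  a 1 = 1 ∧ ∀ m n : ℕ, 1 ≤ m → 1 ≤ n → Nat.Coprime m n → a (m * n) = a m * a n

/-- `a : ℕ → ℂ` is completely multiplicative. -/
def IsCompletelyMultiplicativeFun (a : ℕ → ℂ) : Prop :=
  a 1 = 1 ∧ ∀ m n : ℕ, 1 ≤ m → 1 ≤ n → a (m * n) = a m * a n

/-!
Take `β = 1 - α` and the completely multiplicative `a` with `a 2 = 2 ^ β` and `a p = χ₄ p` at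
odd primes, so that formally `∑ aₙ n⁻ˢ = L(s, χ₄) / (1 - 2 ^ (β - s))`. Writing
`n = 2 ^ j (2k + 1)`, the `N`-th partial sum at `σ` regroups as `∑ⱼ 2 ^ ((β - σ) j) Pⱼ(N)`,
where each `Pⱼ(N)` is a partial sum of the alternating series `∑ (-1)ᵏ (2k + 1) ^ (-σ)`. For
`σ > β ≥ 0` these are uniformly bounded and the geometric weights are summable, so Tannery's
theorem gives convergence; for `σ ≤ β` the terms at `n = 2 ^ j` do not tend to `0`. The same
regrouping with `|aₙ|` shows absolute convergence for `σ > 1`, and `|aₙ| = 1` on odd `n` rules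
it out for `σ ≤ 1`. Hence `σ_c = β` and `σ_a = 1`.
-/

open Finset

namespace Nat

lemma factorization_two_pow_mul_odd (j k : ℕ) : (2 ^ j * (2 * k + 1)).factorization 2 = j := by
  rw [factorization_mul (by positivity) (by omega), Finsupp.add_apply,
    prime_two.factorization_pow, Finsupp.single_eq_same,
    factorization_eq_zero_of_not_dvd (by omega), add_zero]

lemma ordCompl_two_pow_mul_odd (j k : ℕ) : ordCompl[2] (2 ^ j * (2 * k + 1)) = 2 * k + 1 :=
  ordCompl_pow_mul_of_not_dvd j prime_two (by omega)

lemma two_pow_mul_odd_inj {j k j' k' : ℕ} (h : 2 ^ j * (2 * k + 1) = 2 ^ j' * (2 * k' + 1)) :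
    j = j' ∧ k = k' := by
  have hj := congrArg (·.factorization 2) h
  have hk := congrArg (ordCompl[2] ·) h
  rw [ordCompl_two_pow_mul_odd, ordCompl_two_pow_mul_odd] at hk
  rw [factorization_two_pow_mul_odd, factorization_two_pow_mul_odd] at hj
  exact ⟨hj, by omega⟩

def numOddMultiples (d N : ℕ) : ℕ := (N / d + 1) / 2

lemma lt_numOddMultiples_iff {d N k : ℕ} (hd : 0 < d) :
    k < numOddMultiples d N ↔ d * (2 * k + 1) ≤ N := by
  rw [numOddMultiples, mul_comm, ← le_div_iff_mul_le hd]
  omega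

lemma numOddMultiples_eq_zero {d N : ℕ} (h : N < d) : numOddMultiples d N = 0 := by
  simp [numOddMultiples, div_eq_of_lt h]

lemma tendsto_numOddMultiples {d : ℕ} (hd : 0 < d) :
    Tendsto (numOddMultiples d) atTop atTop :=
  tendsto_atTop_atTop.2 fun k => ⟨d * (2 * k + 1), fun _ hN =>
    ((lt_numOddMultiples_iff hd).2 hN).le⟩

end Nat

open Nat in
theorem Finset.sum_range_eq_sum_sum_two_pow_mul_odd {M : Type*} [AddCommMonoid M]
    (f : ℕ → M) (N : ℕ) :
    ∑ n ∈ range N, f (n + 1) =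
      ∑ j ∈ range (N + 1), ∑ k ∈ range (numOddMultiples (2 ^ j) N), f (2 ^ j * (2 * k + 1)) := by
  rw [sum_sigma']
  symm
  refine sum_bij (fun p _ => 2 ^ p.1 * (2 * p.2 + 1) - 1) ?_ ?_ ?_ ?_
  · rintro ⟨j, k⟩ hp
    simp only [mem_sigma, mem_range, lt_numOddMultiples_iff (Nat.two_pow_pos j)] at hp ⊢
    have : 0 < 2 ^ j * (2 * k + 1) := by positivity
    omega
  · rintro ⟨j, k⟩ - ⟨j', k'⟩ - h
    dsimp only at h
    have : 0 < 2 ^ j * (2 * k + 1) := by positivity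
    have : 0 < 2 ^ j' * (2 * k' + 1) := by positivity
    obtain ⟨rfl, rfl⟩ := two_pow_mul_odd_inj (j := j) (j' := j') (k := k) (k' := k') (by omega)
    rfl
  · intro n hn
    obtain ⟨j, _, ⟨k, rfl⟩, hjk⟩ := exists_eq_two_pow_mul_odd n.succ_ne_zero
    rw [mem_range] at hn
    refine ⟨⟨j, k⟩, ?_, by simp only; omega⟩
    simp only [mem_sigma, mem_range, lt_numOddMultiples_iff (Nat.two_pow_pos j)]
    have := j.lt_two_pow_self
    have := Nat.le_mul_of_pos_right (2 ^ j) (show 0 < 2 * k + 1 by omega)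
    omega
  · rintro ⟨j, k⟩ -
    congr 1
    have : 0 < 2 ^ j * (2 * k + 1) := by positivity
    simp only
    omega

open Nat in
theorem tendsto_sum_range_of_eq_two_pow_mul_odd {R : Type*} [NormedRing R] [CompleteSpace R]
    {f x y : ℕ → R} (hf : ∀ j k, f (2 ^ j * (2 * k + 1)) = x j * y k)
    (hx : Summable (‖x ·‖)) {L : R} (hy : Tendsto (fun K => ∑ k ∈ range K, y k) atTop (𝓝 L)) :
    Tendsto (fun N => ∑ n ∈ range N, f (n + 1)) atTop (𝓝 (∑' j, x j * L)) := by
  have regroup (N : ℕ) : ∑ n ∈ range N, f (n + 1) =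
      ∑' j, x j * ∑ k ∈ range (numOddMultiples (2 ^ j) N), y k := by
    rw [sum_range_eq_sum_sum_two_pow_mul_odd, tsum_eq_sum (s := range (N + 1))]
    · simp_rw [hf, mul_sum]
    · intro j hj
      rw [mem_range, not_lt] at hj
      rw [numOddMultiples_eq_zero (by have := j.lt_two_pow_self; omega), sum_range_zero,
        mul_zero]
  obtain ⟨C, hC⟩ := hy.norm.bddAbove_range
  simp_rw [regroup]
  refine tendsto_tsum_of_dominated_convergence (hx.mul_right C)
    (fun j => (hy.comp (tendsto_numOddMultiples (Nat.two_pow_pos j))).const_mul (x j))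
    (Eventually.of_forall fun N j => ?_)
  exact (norm_mul_le _ _).trans (mul_le_mul_of_nonneg_left (hC ⟨_, rfl⟩) (norm_nonneg _))

theorem tendsto_zero_of_tendsto_sum_range {G : Type*} [AddCommGroup G] [TopologicalSpace G]
    [IsTopologicalAddGroup G] {f : ℕ → G} {l : G}
    (h : Tendsto (fun N => ∑ n ∈ range N, f n) atTop (𝓝 l)) : Tendsto f atTop (𝓝 0) := by
  simpa [sum_range_succ_sub_sum] using (h.comp (tendsto_add_atTop_nat 1)).sub h

lemma summable_two_mul_add_one_rpow_neg_iff {σ : ℝ} :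
    Summable (fun k : ℕ => (2 * k + 1 : ℝ) ^ (-σ)) ↔ 1 < σ := by
  have h (k : ℕ) : (2 * k + 1 : ℝ) ^ (-σ) = 2 ^ (-σ) * (1 / |(k : ℝ) + 2⁻¹| ^ σ) := by
    rw [abs_of_pos (by positivity), one_div, ← Real.rpow_neg (by positivity),
      ← Real.mul_rpow (by norm_num) (by positivity)]
    ring_nf
  simp_rw [h, summable_mul_left_iff (by positivity : (2 : ℝ) ^ (-σ) ≠ 0),
    Real.summable_one_div_nat_add_rpow]

lemma antitone_two_mul_add_one_rpow_neg {σ : ℝ} (hσ : 0 ≤ σ) :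
    Antitone (fun k : ℕ => (2 * k + 1 : ℝ) ^ (-σ)) := fun _ _ h =>
  Real.rpow_le_rpow_of_nonpos (by positivity) (by gcongr) (by linarith)

lemma tendsto_two_mul_add_one_rpow_neg {σ : ℝ} (hσ : 0 < σ) :
    Tendsto (fun k : ℕ => (2 * k + 1 : ℝ) ^ (-σ)) atTop (𝓝 0) :=
  (tendsto_rpow_neg_atTop hσ).comp <| tendsto_atTop_add_const_right _ 1 <|
    tendsto_natCast_atTop_atTop.const_mul_atTop two_pos

lemma two_pow_mul_odd_rpow (j k : ℕ) (σ : ℝ) :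
    ((2 ^ j * (2 * k + 1) : ℕ) : ℝ) ^ σ = (2 ^ σ) ^ j * (2 * k + 1 : ℝ) ^ σ := by
  push_cast
  rw [Real.mul_rpow (by positivity) (by positivity), ← Real.rpow_natCast, ← Real.rpow_natCast,
    ← Real.rpow_mul zero_le_two, ← Real.rpow_mul zero_le_two, mul_comm σ, mul_comm]

noncomputable def chi4Scaled (β : ℝ) (n : ℕ) : ℝ :=
  (2 ^ β) ^ n.factorization 2 * ZMod.χ₄ ((ordCompl[2] n : ℕ) : ZMod 4)

section chi4Scaled

variable (β : ℝ)

lemma chi4Scaled_one : chi4Scaled β 1 = 1 := by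
  simp [chi4Scaled]

lemma chi4Scaled_mul {m n : ℕ} (hm : m ≠ 0) (hn : n ≠ 0) :
    chi4Scaled β (m * n) = chi4Scaled β m * chi4Scaled β n := by
  unfold chi4Scaled
  rw [Nat.ordCompl_mul, Nat.factorization_mul hm hn]
  simp only [Finsupp.add_apply, pow_add, Nat.cast_mul, _root_.map_mul, Int.cast_mul]
  ring

lemma chi4Scaled_two_pow_mul_odd (j k : ℕ) :
    chi4Scaled β (2 ^ j * (2 * k + 1)) = (2 ^ β) ^ j * (-1) ^ k := by
  rw [chi4Scaled, Nat.ordCompl_two_pow_mul_odd, Nat.factorization_two_pow_mul_odd,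
    ZMod.χ₄_eq_neg_one_pow (by omega), show (2 * k + 1) / 2 = k by omega]
  push_cast
  rfl

lemma chi4Scaled_div_rpow_two_pow_mul_odd (σ : ℝ) (j k : ℕ) :
    chi4Scaled β (2 ^ j * (2 * k + 1)) / ((2 ^ j * (2 * k + 1) : ℕ) : ℝ) ^ σ =
      (2 ^ (β - σ)) ^ j * ((-1) ^ k * (2 * k + 1 : ℝ) ^ (-σ)) := by
  rw [chi4Scaled_two_pow_mul_odd, two_pow_mul_odd_rpow, Real.rpow_sub two_pos, div_pow,
    Real.rpow_neg (by positivity)]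
  field_simp

lemma abs_chi4Scaled_div_rpow_two_pow_mul_odd (σ : ℝ) (j k : ℕ) :
    |chi4Scaled β (2 ^ j * (2 * k + 1))| / ((2 ^ j * (2 * k + 1) : ℕ) : ℝ) ^ σ =
      (2 ^ (β - σ)) ^ j * (2 * k + 1 : ℝ) ^ (-σ) := by
  rw [← abs_of_pos (by positivity : (0 : ℝ) < ((2 ^ j * (2 * k + 1) : ℕ) : ℝ) ^ σ), ← abs_div,
    chi4Scaled_div_rpow_two_pow_mul_odd, abs_mul, abs_mul, abs_pow, abs_neg_one_pow, one_mul,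
    abs_of_pos (by positivity), abs_of_pos (by positivity)]

lemma isCompletelyMultiplicativeFun_chi4Scaled :
    IsCompletelyMultiplicativeFun (fun n => (chi4Scaled β n : ℂ)) :=
  ⟨by simp [chi4Scaled_one], fun m n hm hn => by
    simp [chi4Scaled_mul β (Nat.one_le_iff_ne_zero.1 hm) (Nat.one_le_iff_ne_zero.1 hn)]⟩

end chi4Scaled

lemma dirichletPartial_ofReal (r : ℕ → ℝ) (σ : ℝ) :
    dirichletPartial (fun n => (r n : ℂ)) σ =
      fun N => ((∑ n ∈ range N, r (n + 1) / ((n + 1 : ℕ) : ℝ) ^ σ : ℝ) : ℂ) := by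
  ext N
  push_cast
  refine sum_congr rfl fun n _ => ?_
  rw [← Complex.ofReal_natCast, ← Complex.ofReal_one, ← Complex.ofReal_add,
    ← Complex.ofReal_cpow (by positivity)]

lemma dirichletConvergesAt_ofReal_iff (r : ℕ → ℝ) (σ : ℝ) :
    DirichletConvergesAt (fun n => (r n : ℂ)) σ ↔
      ∃ l : ℝ, Tendsto (fun N => ∑ n ∈ range N, r (n + 1) / ((n + 1 : ℕ) : ℝ) ^ σ) atTop (𝓝 l) := by
  rw [DirichletConvergesAt, dirichletPartial_ofReal]
  constructor
  · rintro ⟨l, hl⟩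
    exact ⟨l.re, by simpa only [Function.comp_def, Complex.ofReal_re] using
      (Complex.continuous_re.tendsto l).comp hl⟩
  · rintro ⟨l, hl⟩
    exact ⟨l, (Complex.continuous_ofReal.tendsto l).comp hl⟩

lemma dirichletAbsConvergesAt_ofReal_iff (r : ℕ → ℝ) (σ : ℝ) :
    DirichletAbsConvergesAt (fun n => (r n : ℂ)) σ ↔
      Summable (fun n => |r (n + 1)| / ((n + 1 : ℕ) : ℝ) ^ σ) := by
  simp [DirichletAbsConvergesAt]

lemma dirichletConvergesAt_chi4Scaled_iff {β σ : ℝ} (hβ : 0 ≤ β) :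
    DirichletConvergesAt (fun n => (chi4Scaled β n : ℂ)) σ ↔ β < σ := by
  rw [dirichletConvergesAt_ofReal_iff]
  constructor
  · rintro ⟨l, hl⟩
    by_contra! hσ
    have hterm : Tendsto (fun n => chi4Scaled β n / (n : ℝ) ^ σ) atTop (𝓝 0) :=
      (tendsto_add_atTop_iff_nat 1).1 (tendsto_zero_of_tendsto_sum_range hl)
    have hpow := hterm.comp (tendsto_pow_atTop_atTop_of_one_lt one_lt_two)
    have hρ : 1 ≤ (2 : ℝ) ^ (β - σ) := Real.one_le_rpow one_le_two (by linarith)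
    refine absurd (ge_of_tendsto' hpow fun j => ?_) (by norm_num : ¬ (1 : ℝ) ≤ 0)
    have h := chi4Scaled_div_rpow_two_pow_mul_odd β σ j 0
    simp only [mul_zero, zero_add, mul_one, Nat.cast_zero, pow_zero, Real.one_rpow] at h
    rw [Function.comp_apply, h]
    exact one_le_pow₀ hρ
  · intro hσ
    have hρ : ‖(2 : ℝ) ^ (β - σ)‖ < 1 := by
      rw [Real.norm_of_nonneg (by positivity)]
      exact Real.rpow_lt_one_of_one_lt_of_neg one_lt_two (by linarith)
    obtain ⟨L, hL⟩ := (antitone_two_mul_add_one_rpow_neg (σ := σ) (by linarith))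
      |>.tendsto_alternating_series_of_tendsto_zero (tendsto_two_mul_add_one_rpow_neg (by linarith))
    exact ⟨_, tendsto_sum_range_of_eq_two_pow_mul_odd
      (f := fun n => chi4Scaled β n / (n : ℝ) ^ σ) (chi4Scaled_div_rpow_two_pow_mul_odd β σ)
      (summable_norm_geometric_of_norm_lt_one hρ) hL⟩

lemma dirichletAbsConvergesAt_chi4Scaled_iff {β σ : ℝ} (hβ : β ≤ 1) :
    DirichletAbsConvergesAt (fun n => (chi4Scaled β n : ℂ)) σ ↔ 1 < σ := by
  rw [dirichletAbsConvergesAt_ofReal_iff, ← summable_two_mul_add_one_rpow_neg_iff]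
  constructor
  · intro h
    refine (h.comp_injective (mul_right_injective₀ two_ne_zero)).congr fun k => ?_
    simpa using abs_chi4Scaled_div_rpow_two_pow_mul_odd β σ 0 k
  · intro hy
    have hσ : 1 < σ := summable_two_mul_add_one_rpow_neg_iff.1 hy
    have hρ : ‖(2 : ℝ) ^ (β - σ)‖ < 1 := by
      rw [Real.norm_of_nonneg (by positivity)]
      exact Real.rpow_lt_one_of_one_lt_of_neg one_lt_two (by linarith)
    exact ((hasSum_iff_tendsto_nat_of_nonneg (fun _ => by positivity) _).2
      (tendsto_sum_range_of_eq_two_pow_mul_odd (f := fun n => |chi4Scaled β n| / (n : ℝ) ^ σ)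
        (abs_chi4Scaled_div_rpow_two_pow_mul_odd β σ)
        (summable_norm_geometric_of_norm_lt_one hρ) hy.hasSum.tendsto_sum_nat)).summable

/-- For every `α ∈ [0,1]` there is a completely multiplicative `a : ℕ → ℂ`
whose Dirichlet series has finite abscissas of convergence and absolute convergence with
`σ_a - σ_c = α`. -/
theorem exists_completelyMultiplicative_sigmaA_sub_sigmaC_eq
    (α : ℝ) (hα : α ∈ Set.Icc (0 : ℝ) 1) :
    ∃ a : ℕ → ℂ, IsCompletelyMultiplicativeFun a ∧
      {σ : ℝ | DirichletConvergesAt a σ}.Nonempty ∧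
      BddBelow {σ : ℝ | DirichletConvergesAt a σ} ∧
      {σ : ℝ | DirichletAbsConvergesAt a σ}.Nonempty ∧
      BddBelow {σ : ℝ | DirichletAbsConvergesAt a σ} ∧
      sigmaA a - sigmaC a = α := by
  obtain ⟨hα0, hα1⟩ := hα
  have hconv : {σ : ℝ | DirichletConvergesAt (fun n => (chi4Scaled (1 - α) n : ℂ)) σ} =
      Set.Ioi (1 - α) :=
    Set.ext fun _ => dirichletConvergesAt_chi4Scaled_iff (by linarith)
  have habs : {σ : ℝ | DirichletAbsConvergesAt (fun n => (chi4Scaled (1 - α) n : ℂ)) σ} =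
      Set.Ioi 1 :=
    Set.ext fun _ => dirichletAbsConvergesAt_chi4Scaled_iff (by linarith)
  refine ⟨_, isCompletelyMultiplicativeFun_chi4Scaled (1 - α), ?_⟩
  rw [sigmaA, sigmaC, hconv, habs, csInf_Ioi, csInf_Ioi]
  exact ⟨Set.nonempty_Ioi, bddBelow_Ioi, Set.nonempty_Ioi, bddBelow_Ioi, by ring⟩
end

section
/- Let F(z) = Σ_{m=0}^∞ b_m z^m be an analytic function on the open unit disc 𝔻 with M := sup_{z ∈ 𝔻} |F(z)| < ∞. Then for every r with 0 ≤ r ≤ 1/3, Σ_{m=0}^∞ |b_m| r^m ≤ M. -/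
open Metric Set ComplexConjugate
open scoped NNReal

/-!
Averaging `F` over the rotations `z ↦ ζ ^ k * z` by the `m`-th roots of unity keeps only the
terms `b (j * m) * z ^ (j * m)`, so `w ↦ ∑ b (j * m) * w ^ j` is again bounded by `M` on the disc.
The Schwarz–Pick lemma at the origin for this function gives Wiener's estimate
`M * ‖b m‖ ≤ M ^ 2 - ‖b 0‖ ^ 2` for `m ≠ 0`, and summing the geometric series,
`∑ ‖b m‖ * r ^ m ≤ ‖b 0‖ + (M ^ 2 - ‖b 0‖ ^ 2) / (2 * M) ≤ M` once `r ≤ 1 / 3`.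
Working with the strict bound `‖F‖ < M` keeps the values of `F` inside the open disc where
the Möbius automorphisms live; the non-strict bound follows by letting `M' ↓ M`.
-/

theorem IsPrimitiveRoot.sum_pow_mul_eq_ite {R : Type*} [CommRing R] [IsDomain R] {ζ : R}
    {m : ℕ} (hζ : IsPrimitiveRoot ζ m) (j : ℕ) :
    ∑ k ∈ Finset.range m, ζ ^ (k * j) = if m ∣ j then (m : R) else 0 := by
  simp_rw [mul_comm _ j, pow_mul]
  split_ifs with hdvd
  · simp [(hζ.pow_eq_one_iff_dvd j).mpr hdvd]
  · have hne : ζ ^ j - 1 ≠ 0 := sub_ne_zero.mpr fun h => hdvd ((hζ.pow_eq_one_iff_dvd j).mp h)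
    have hpow : (ζ ^ j) ^ m = 1 := by rw [← pow_mul, mul_comm, pow_mul, hζ.pow_eq_one, one_pow]
    have hgeom := mul_geom_sum (ζ ^ j) m
    rw [hpow, sub_self] at hgeom
    exact (mul_eq_zero.mp hgeom).resolve_left hne

theorem hasFPowerSeriesOnBall_ofScalars_of_hasSum {c : ℕ → ℂ} {f : ℂ → ℂ} {R : ℝ≥0}
    (hR : 0 < R) (hf : ∀ z ∈ ball (0 : ℂ) R, HasSum (fun n => c n * z ^ n) (f z)) :
    HasFPowerSeriesOnBall f (FormalMultilinearSeries.ofScalars ℂ c) 0 R where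
  r_le := by
    refine ENNReal.le_of_forall_nnreal_lt fun ρ hρ => ?_
    have hρR : (ρ : ℝ) < R := by exact_mod_cast hρ
    have hmem : (ρ : ℂ) ∈ ball (0 : ℂ) R := by simpa [Complex.norm_of_nonneg ρ.2] using hρR
    refine FormalMultilinearSeries.le_radius_of_tendsto _ (l := 0) ?_
    simpa [FormalMultilinearSeries.ofScalars_norm, Complex.norm_of_nonneg ρ.2] using
      (hf _ hmem).summable.tendsto_atTop_zero.norm
  r_pos := by exact_mod_cast hR
  hasSum {y} hy := by
    rw [eball_coe] at hy
    simpa [FormalMultilinearSeries.ofScalars_apply_eq, mul_comm] using hf y hy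

theorem normSq_sq_sub_conj_mul_sub_sq_mul_normSq (R : ℝ) (a w : ℂ) :
    Complex.normSq ((R : ℂ) ^ 2 - conj a * w) - R ^ 2 * Complex.normSq (w - a)
      = (R ^ 2 - Complex.normSq a) * (R ^ 2 - Complex.normSq w) := by
  simp only [Complex.normSq_apply, Complex.mul_re, Complex.mul_im, Complex.sub_re,
    Complex.sub_im, Complex.conj_re, Complex.conj_im, sq, Complex.ofReal_re, Complex.ofReal_im]
  ring

theorem norm_mul_sub_lt_norm_sq_sub_conj_mul {R : ℝ} {a w : ℂ} (ha : ‖a‖ < R) (hw : ‖w‖ < R) :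
    ‖(R : ℂ) * (w - a)‖ < ‖(R : ℂ) ^ 2 - conj a * w‖ := by
  have hR : 0 < R := (norm_nonneg a).trans_lt ha
  refine lt_of_pow_lt_pow_left₀ 2 (norm_nonneg _) ?_
  have key := normSq_sq_sub_conj_mul_sub_sq_mul_normSq R a w
  rw [Complex.normSq_eq_norm_sq, Complex.normSq_eq_norm_sq, Complex.normSq_eq_norm_sq,
    Complex.normSq_eq_norm_sq] at key
  rw [norm_mul, Complex.norm_real, Real.norm_of_nonneg hR.le, mul_pow]
  have : 0 < (R ^ 2 - ‖a‖ ^ 2) * (R ^ 2 - ‖w‖ ^ 2) := by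
    apply mul_pos <;> nlinarith [norm_nonneg a, norm_nonneg w]
  linarith

theorem mul_norm_deriv_le_sq_sub_norm_sq {f : ℂ → ℂ} {R : ℝ}
    (hd : DifferentiableOn ℂ f (ball 0 1)) (hf : MapsTo f (ball 0 1) (ball 0 R)) :
    R * ‖deriv f 0‖ ≤ R ^ 2 - ‖f 0‖ ^ 2 := by
  set a := f 0
  have h0 : (0 : ℂ) ∈ ball (0 : ℂ) 1 := mem_ball_self one_pos
  have ha : ‖a‖ < R := mem_ball_zero_iff.mp (hf h0)
  have hR : 0 < R := (norm_nonneg a).trans_lt ha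
  have hlt : ∀ z ∈ ball (0 : ℂ) 1, ‖(R : ℂ) * (f z - a)‖ < ‖(R : ℂ) ^ 2 - conj a * f z‖ :=
    fun z hz => norm_mul_sub_lt_norm_sq_sub_conj_mul ha (mem_ball_zero_iff.mp (hf hz))
  have hden : ∀ z ∈ ball (0 : ℂ) 1, (R : ℂ) ^ 2 - conj a * f z ≠ 0 :=
    fun z hz => norm_pos_iff.mp ((norm_nonneg _).trans_lt (hlt z hz))
  -- `g` is `f` followed by the disc automorphism of `ball 0 R` sending `a` to `0`.
  set g : ℂ → ℂ := fun z => R * (f z - a) / (R ^ 2 - conj a * f z)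
  have hgd : DifferentiableOn ℂ g (ball 0 1) :=
    ((hd.sub_const a).const_mul _).div ((hd.const_mul _).const_sub _) hden
  have hg : MapsTo g (ball 0 1) (closedBall (g 0) 1) := by
    intro z hz
    rw [show g 0 = 0 by simp [g, a], mem_closedBall_zero_iff, norm_div,
      div_le_one (norm_pos_iff.mpr (hden z hz))]
    exact (hlt z hz).le
  have hD : (0 : ℝ) < R ^ 2 - ‖a‖ ^ 2 := by nlinarith [norm_nonneg a]
  have hf' : HasDerivAt f (deriv f 0) 0 :=
    (hd.differentiableAt (isOpen_ball.mem_nhds h0)).hasDerivAt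
  have hg' : deriv g 0 = R * deriv f 0 / ((R ^ 2 - ‖a‖ ^ 2 : ℝ) : ℂ) := by
    have hconj : (R : ℂ) ^ 2 - conj a * a = ((R ^ 2 - ‖a‖ ^ 2 : ℝ) : ℂ) := by
      rw [Complex.conj_mul']; push_cast; ring
    have hD' : ((R ^ 2 - ‖a‖ ^ 2 : ℝ) : ℂ) ≠ 0 := by exact_mod_cast hD.ne'
    rw [(((hf'.sub_const a).const_mul (R : ℂ)).fun_div ((hf'.const_mul (conj a)).const_sub _)
      (hden 0 h0)).deriv, hconj]
    field_simp
    ring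
  have hschwarz := Complex.norm_deriv_le_one_of_mapsTo_ball hgd hg one_pos
  rw [hg', norm_div, norm_mul, Complex.norm_real, Complex.norm_real, Real.norm_of_nonneg hR.le,
    Real.norm_of_nonneg hD.le, div_le_one hD] at hschwarz
  exact hschwarz

theorem summable_and_tsum_mul_pow_le {x : ℕ → ℝ} {C r : ℝ} (hx : ∀ n, 0 ≤ x n)
    (hC : ∀ n, n ≠ 0 → x n ≤ C) (hr0 : 0 ≤ r) (hr1 : r < 1) :
    Summable (fun n => x n * r ^ n) ∧ ∑' n, x n * r ^ n ≤ x 0 + C * r / (1 - r) := by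
  have hgeom : HasSum (fun n => C * r * r ^ n) (C * r / (1 - r)) := by
    simpa [div_eq_mul_inv] using (hasSum_geometric_of_lt_one hr0 hr1).mul_left (C * r)
  have hle : ∀ n, x (n + 1) * r ^ (n + 1) ≤ C * r * r ^ n := fun n => by
    rw [pow_succ', ← mul_assoc]
    exact mul_le_mul_of_nonneg_right (mul_le_mul_of_nonneg_right (hC _ n.succ_ne_zero) hr0)
      (pow_nonneg hr0 n)
  have htail : Summable (fun n => x (n + 1) * r ^ (n + 1)) :=
    hgeom.summable.of_nonneg_of_le (fun n => mul_nonneg (hx _) (pow_nonneg hr0 _)) hle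
  have hsum : Summable (fun n => x n * r ^ n) := (summable_nat_add_iff 1).mp htail
  refine ⟨hsum, ?_⟩
  rw [hsum.tsum_eq_zero_add, pow_zero, mul_one]
  gcongr
  exact (htail.tsum_le_tsum hle hgeom.summable).trans_eq hgeom.tsum_eq

section Coefficients

variable {b : ℕ → ℂ} {F : ℂ → ℂ} {M : ℝ}

theorem mul_norm_coeff_one_le (hF : ∀ z ∈ ball (0 : ℂ) 1, HasSum (fun n => b n * z ^ n) (F z))
    (hM : ∀ z ∈ ball (0 : ℂ) 1, ‖F z‖ < M) : M * ‖b 1‖ ≤ M ^ 2 - ‖b 0‖ ^ 2 := by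
  have hp := hasFPowerSeriesOnBall_ofScalars_of_hasSum (R := 1) one_pos (by simpa using hF)
  have hd := hp.differentiableOn
  rw [eball_coe, NNReal.coe_one] at hd
  have h := mul_norm_deriv_le_sq_sub_norm_sq hd fun z hz => mem_ball_zero_iff.mpr (hM z hz)
  rw [hp.hasFPowerSeriesAt.deriv, ← hp.hasFPowerSeriesAt.coeff_zero fun _ => 0] at h
  simpa using h

theorem hasSum_ite_dvd_of_hasSum (hF : ∀ z ∈ ball (0 : ℂ) 1, HasSum (fun n => b n * z ^ n) (F z))
    {m : ℕ} (hm : m ≠ 0) {ζ : ℂ} (hζ : IsPrimitiveRoot ζ m) {z : ℂ} (hz : z ∈ ball (0 : ℂ) 1) :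
    HasSum (fun n => if m ∣ n then b n * z ^ n else 0)
      ((m : ℂ)⁻¹ * ∑ k ∈ Finset.range m, F (ζ ^ k * z)) := by
  have hmem : ∀ k : ℕ, ζ ^ k * z ∈ ball (0 : ℂ) 1 := fun k => by
    simpa [norm_mul, norm_pow, hζ.norm'_eq_one hm] using hz
  have hsum := (hasSum_sum (s := Finset.range m) fun k _ => hF _ (hmem k)).mul_left (m : ℂ)⁻¹
  refine hsum.congr_fun fun n => ?_
  have hterm : ∀ k, b n * (ζ ^ k * z) ^ n = b n * z ^ n * ζ ^ (k * n) := fun k => by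
    rw [mul_pow, ← pow_mul]; ring
  simp_rw [hterm, ← Finset.mul_sum, hζ.sum_pow_mul_eq_ite]
  split_ifs
  · field_simp
  · simp

theorem exists_hasSum_coeff_mul_pow_of_norm_lt
    (hF : ∀ z ∈ ball (0 : ℂ) 1, HasSum (fun n => b n * z ^ n) (F z))
    (hM : ∀ z ∈ ball (0 : ℂ) 1, ‖F z‖ < M) {m : ℕ} (hm : m ≠ 0) {w : ℂ}
    (hw : w ∈ ball (0 : ℂ) 1) :
    ∃ S, HasSum (fun j => b (j * m) * w ^ j) S ∧ ‖S‖ < M := by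
  obtain ⟨z, rfl⟩ := IsAlgClosed.exists_pow_nat_eq w (Nat.pos_of_ne_zero hm)
  have hz : z ∈ ball (0 : ℂ) 1 := by
    rw [mem_ball_zero_iff, norm_pow, pow_lt_one_iff_of_nonneg (norm_nonneg z) hm] at hw
    exact mem_ball_zero_iff.mpr hw
  have hζ := Complex.isPrimitiveRoot_exp m hm
  set ζ := Complex.exp (2 * Real.pi * Complex.I / m)
  refine ⟨(m : ℂ)⁻¹ * ∑ k ∈ Finset.range m, F (ζ ^ k * z), ?_, ?_⟩
  · have hsupp : ∀ n ∉ range (· * m), (if m ∣ n then b n * z ^ n else 0) = 0 := by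
      rintro n hn
      rw [if_neg]
      rintro ⟨j, rfl⟩
      exact hn ⟨j, mul_comm j m⟩
    refine ((mul_left_injective₀ hm).hasSum_iff hsupp |>.mpr
      (hasSum_ite_dvd_of_hasSum hF hm hζ hz)).congr_fun fun j => ?_
    simp [← pow_mul, mul_comm]
  · have hmpos : (0 : ℝ) < m := by exact_mod_cast Nat.pos_of_ne_zero hm
    have hbound : ‖∑ k ∈ Finset.range m, F (ζ ^ k * z)‖ < m * M := calc
      ‖∑ k ∈ Finset.range m, F (ζ ^ k * z)‖ ≤ ∑ k ∈ Finset.range m, ‖F (ζ ^ k * z)‖ :=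
        norm_sum_le _ _
      _ < ∑ _k ∈ Finset.range m, M := Finset.sum_lt_sum_of_nonempty
        (Finset.nonempty_range_iff.mpr hm) fun k _ => hM _ (by
          simpa [norm_mul, norm_pow, hζ.norm'_eq_one hm] using hz)
      _ = m * M := by simp
    rw [norm_mul, norm_inv, Complex.norm_natCast, inv_mul_lt_iff₀ hmpos]
    exact hbound

theorem mul_norm_coeff_le (hF : ∀ z ∈ ball (0 : ℂ) 1, HasSum (fun n => b n * z ^ n) (F z))
    (hM : ∀ z ∈ ball (0 : ℂ) 1, ‖F z‖ < M) {m : ℕ} (hm : m ≠ 0) :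
    M * ‖b m‖ ≤ M ^ 2 - ‖b 0‖ ^ 2 := by
  have hsec := fun w (hw : w ∈ ball (0 : ℂ) 1) =>
    exists_hasSum_coeff_mul_pow_of_norm_lt hF hM hm hw
  have := mul_norm_coeff_one_le (b := fun j => b (j * m)) (F := fun w => ∑' j, b (j * m) * w ^ j)
    (fun w hw => (hsec w hw).choose_spec.1.summable.hasSum) fun w hw => by
      obtain ⟨S, hS, hSM⟩ := hsec w hw
      rwa [hS.tsum_eq]
  simpa using this

theorem bohr_inequality_of_norm_lt
    (hF : ∀ z ∈ ball (0 : ℂ) 1, HasSum (fun n => b n * z ^ n) (F z))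
    (hM : ∀ z ∈ ball (0 : ℂ) 1, ‖F z‖ < M) {r : ℝ} (hr0 : 0 ≤ r) (hr : r ≤ 1 / 3) :
    Summable (fun n => ‖b n‖ * r ^ n) ∧ ∑' n, ‖b n‖ * r ^ n ≤ M := by
  have hb0 : ‖b 0‖ < M := by
    simpa [(hF 0 (mem_ball_self one_pos)).unique (hasSum_single 0 fun n hn => by simp [hn])]
      using hM 0 (mem_ball_self one_pos)
  have hM0 : 0 < M := (norm_nonneg _).trans_lt hb0
  set C := (M ^ 2 - ‖b 0‖ ^ 2) / M
  have hC : ∀ n, n ≠ 0 → ‖b n‖ ≤ C := fun n hn => by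
    rw [le_div_iff₀ hM0, mul_comm]
    exact mul_norm_coeff_le hF hM hn
  obtain ⟨hsum, hle⟩ :=
    summable_and_tsum_mul_pow_le (fun n => norm_nonneg (b n)) hC hr0 (by linarith)
  refine ⟨hsum, hle.trans ?_⟩
  have hC0 : 0 ≤ C := div_nonneg (by nlinarith [norm_nonneg (b 0)]) hM0.le
  -- `‖b 0‖ + C / 2 ≤ M` is `(M - ‖b 0‖) ^ 2 ≥ 0`.
  have hhalf : C * r / (1 - r) ≤ C / 2 := by
    rw [div_le_iff₀ (by linarith)]
    nlinarith
  have hfinal : ‖b 0‖ + C / 2 ≤ M := by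
    have hCM : C * M = M ^ 2 - ‖b 0‖ ^ 2 := div_mul_cancel₀ _ hM0.ne'
    nlinarith [sq_nonneg (M - ‖b 0‖)]
  linarith

end Coefficients

/-- Bohr's inequality: if `F(z) = ∑ b_m z^m` is bounded by `M` on the unit
disc, then `∑ |b_m| r^m ≤ M` for `0 ≤ r ≤ 1/3`. -/
theorem bohr_inequality (b : ℕ → ℂ) (F : ℂ → ℂ) (M : ℝ)
    (hF : ∀ z ∈ Metric.ball (0 : ℂ) 1, HasSum (fun m : ℕ => b m * z ^ m) (F z))
    (hM : ∀ z ∈ Metric.ball (0 : ℂ) 1, ‖F z‖ ≤ M)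
    (r : ℝ) (hr0 : 0 ≤ r) (hr : r ≤ 1 / 3) :
    Summable (fun m : ℕ => ‖b m‖ * r ^ m) ∧ ∑' m : ℕ, ‖b m‖ * r ^ m ≤ M := by
  have hlt : ∀ M' > M, ∀ z ∈ ball (0 : ℂ) 1, ‖F z‖ < M' := fun M' hM' z hz =>
    (hM z hz).trans_lt hM'
  exact ⟨(bohr_inequality_of_norm_lt hF (hlt _ (lt_add_one M)) hr0 hr).1,
    le_of_forall_gt_imp_ge_of_dense fun M' hM' =>
      (bohr_inequality_of_norm_lt hF (hlt M' hM') hr0 hr).2⟩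
end

section
/- For any a : ℕ → ℂ whose Dirichlet series f(s) = Σ_{n=1}^∞ a_n n^{-s} converges uniformly in t on some vertical line abscissa, the abscissas of uniform and absolute convergence satisfy σ_a(f) − σ_b(f) ≤ 1/2; equivalently, if Σ_{n=1}^∞ a_n n^{-σ-it} converges uniformly in t ∈ ℝ for some σ ∈ ℝ, then Σ_{n=1}^∞ |a_n| n^{-σ-1/2-ε} converges for every ε > 0. -/
open Filter Topology

/-!
On the line `Re s = σ` the partial sums are trigonometric polynomials
`∑ cₙ e^{-it log(n+1)}` with `cₙ = a_{n+1} (n+1)^{-σ}`, and uniform convergence bounds every block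
`∑_{M ≤ n < N}` by `1` uniformly in `t`. Sampling `t = θk` for a `θ` that keeps the unimodular
numbers `e^{-iθ log(n+1)}` pairwise distinct (all but countably many `θ` do), the Cesàro means in
`k` of `|block|²` tend to `∑ |cₙ|²` by orthogonality of characters, so `(cₙ) ∈ ℓ²`.
Cauchy–Schwarz against `∑ (n+1)^{-1-2ε} < ∞` gives absolute convergence at `σ + 1/2 + ε`.
-/

open Finset Complex ComplexConjugate

theorem tendsto_inv_mul_geom_sum {z : ℂ} (hz : ‖z‖ ≤ 1) :
    Tendsto (fun K : ℕ => (K : ℂ)⁻¹ * ∑ k ∈ range K, z ^ k) atTop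
      (𝓝 (if z = 1 then 1 else 0)) := by
  split_ifs with hz1
  · refine tendsto_const_nhds.congr' ?_
    filter_upwards [eventually_ne_atTop 0] with K hK
    simp [hz1, hK]
  · have hd : 0 < ‖z - 1‖ := norm_pos_iff.mpr (sub_ne_zero.mpr hz1)
    refine squeeze_zero_norm (fun K => ?_)
      (by simpa using (tendsto_inv_atTop_nhds_zero_nat (𝕜 := ℝ)).mul_const (2 / ‖z - 1‖))
    rw [norm_mul, norm_inv, norm_natCast, geom_sum_eq hz1, norm_div]
    gcongr
    calc ‖z ^ K - 1‖ ≤ ‖z‖ ^ K + ‖(1 : ℂ)‖ := by rw [← norm_pow]; exact norm_sub_le _ _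
      _ ≤ 2 := by simp only [norm_one]; linarith [pow_le_one₀ (norm_nonneg z) hz (n := K)]

section MeanValue

variable {ι : Type*}

theorem ofReal_norm_sum_mul_pow_sq (F : Finset ι) (c u : ι → ℂ) (k : ℕ) :
    ((‖∑ n ∈ F, c n * u n ^ k‖ ^ 2 : ℝ) : ℂ)
      = ∑ m ∈ F, ∑ n ∈ F, c m * conj (c n) * (u m * conj (u n)) ^ k := by
  rw [ofReal_pow, ← mul_conj', map_sum, sum_mul_sum]
  refine sum_congr rfl fun m _ => sum_congr rfl fun n _ => ?_
  simp only [map_mul, map_pow]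
  ring

theorem mul_conj_eq_one_iff_of_norm_eq_one {u : ι → ℂ} {F : Finset ι} (hu : ∀ n ∈ F, ‖u n‖ = 1)
    (hinj : Set.InjOn u F) {m n : ι} (hm : m ∈ F) (hn : n ∈ F) :
    u m * conj (u n) = 1 ↔ m = n := by
  refine ⟨fun h => hinj hm hn ?_, fun h => ?_⟩
  · calc u m = u m * (conj (u n) * u n) := by rw [conj_mul', hu n hn]; simp
      _ = u n := by rw [← mul_assoc, h, one_mul]
  · rw [h, mul_conj', hu n hn]; simp

theorem tendsto_average_norm_sum_mul_pow_sq (F : Finset ι) (c u : ι → ℂ)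
    (hu : ∀ n ∈ F, ‖u n‖ = 1) (hinj : Set.InjOn u F) :
    Tendsto (fun K : ℕ => (K : ℝ)⁻¹ * ∑ k ∈ range K, ‖∑ n ∈ F, c n * u n ^ k‖ ^ 2) atTop
      (𝓝 (∑ n ∈ F, ‖c n‖ ^ 2)) := by
  have hC : Tendsto (fun K : ℕ =>
      ∑ m ∈ F, ∑ n ∈ F, c m * conj (c n) * ((K : ℂ)⁻¹ * ∑ k ∈ range K, (u m * conj (u n)) ^ k))
      atTop (𝓝 (∑ m ∈ F, ∑ n ∈ F, c m * conj (c n) * if u m * conj (u n) = 1 then 1 else 0)) :=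
    tendsto_finsetSum _ fun m hm => tendsto_finsetSum _ fun n hn =>
      (tendsto_inv_mul_geom_sum (by simp [hu m hm, hu n hn])).const_mul _
  have hlim : ∑ m ∈ F, ∑ n ∈ F, c m * conj (c n) * (if u m * conj (u n) = 1 then 1 else 0)
      = ((∑ n ∈ F, ‖c n‖ ^ 2 : ℝ) : ℂ) := by
    push_cast
    refine sum_congr rfl fun m hm => ?_
    rw [sum_eq_single_of_mem m hm fun n hn hnm => ?_,
      if_pos ((mul_conj_eq_one_iff_of_norm_eq_one hu hinj hm hm).mpr rfl), mul_one, mul_conj']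
    rw [if_neg ((mul_conj_eq_one_iff_of_norm_eq_one hu hinj hm hn).not.mpr (Ne.symm hnm)), mul_zero]
  have hexpand : ∀ K : ℕ, (((K : ℝ)⁻¹ * ∑ k ∈ range K, ‖∑ n ∈ F, c n * u n ^ k‖ ^ 2 : ℝ) : ℂ)
      = ∑ m ∈ F, ∑ n ∈ F, c m * conj (c n) *
          ((K : ℂ)⁻¹ * ∑ k ∈ range K, (u m * conj (u n)) ^ k) := fun K => by
    rw [ofReal_mul, ofReal_sum]
    simp_rw [ofReal_norm_sum_mul_pow_sq, mul_sum, sum_comm (s := range K)]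
    push_cast
    refine sum_congr rfl fun m _ => sum_congr rfl fun n _ => sum_congr rfl fun k _ => by ring
  have h := (continuous_re.tendsto _).comp (hC.congr fun K => (hexpand K).symm)
  simp only [hlim, Function.comp_def, ofReal_re] at h
  exact h

theorem sum_norm_sq_le_of_forall_norm_sum_mul_pow_le (F : Finset ι) (c u : ι → ℂ)
    (hu : ∀ n ∈ F, ‖u n‖ = 1) (hinj : Set.InjOn u F) {B : ℝ}
    (hB : ∀ k : ℕ, ‖∑ n ∈ F, c n * u n ^ k‖ ≤ B) :
    ∑ n ∈ F, ‖c n‖ ^ 2 ≤ B ^ 2 := by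
  refine le_of_tendsto' (tendsto_average_norm_sum_mul_pow_sq F c u hu hinj) fun K => ?_
  rcases K.eq_zero_or_pos with rfl | hK
  · simpa using sq_nonneg B
  calc (K : ℝ)⁻¹ * ∑ k ∈ range K, ‖∑ n ∈ F, c n * u n ^ k‖ ^ 2
      ≤ (K : ℝ)⁻¹ * ∑ k ∈ range K, B ^ 2 := by
        gcongr with k
        exact hB k
    _ = B ^ 2 := by
        rw [sum_const, card_range, nsmul_eq_mul, inv_mul_cancel_left₀ (by positivity)]

theorem exists_injective_exp_mul_I [Countable ι] {lam : ι → ℝ} (hlam : Function.Injective lam) :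
    ∃ θ : ℝ, Function.Injective fun n => exp ((θ * lam n : ℝ) * I) := by
  set bad : Set ℝ := Set.range fun p : ι × ι × ℤ => 2 * Real.pi * p.2.2 / (lam p.1 - lam p.2.1)
  obtain ⟨θ, hθ⟩ := ((Set.countable_range _).dense_compl ℝ : Dense badᶜ).nonempty
  refine ⟨θ, fun m n hmn => by_contra fun hne => hθ ?_⟩
  obtain ⟨j, hj⟩ := exp_eq_exp_iff_exists_int.mp hmn
  have hsub : lam m - lam n ≠ 0 := sub_ne_zero.mpr (hlam.ne hne)
  have hj' : θ * (lam m - lam n) = 2 * Real.pi * j := by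
    have : ((θ * (lam m - lam n) - 2 * Real.pi * j : ℝ) : ℂ) * I = 0 := by
      push_cast at hj ⊢
      linear_combination hj
    rwa [mul_eq_zero, or_iff_left I_ne_zero, ofReal_eq_zero, sub_eq_zero] at this
  exact ⟨⟨m, n, j⟩, by simp [← hj', hsub]⟩

theorem sum_norm_sq_le_of_forall_norm_sum_exp_le [Countable ι] (F : Finset ι) (c : ι → ℂ)
    {lam : ι → ℝ} (hlam : Function.Injective lam) {B : ℝ}
    (hB : ∀ t : ℝ, ‖∑ n ∈ F, c n * exp ((lam n * t : ℝ) * I)‖ ≤ B) :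
    ∑ n ∈ F, ‖c n‖ ^ 2 ≤ B ^ 2 := by
  obtain ⟨θ, hθ⟩ := exists_injective_exp_mul_I hlam
  refine sum_norm_sq_le_of_forall_norm_sum_mul_pow_le F c _ (fun n _ => norm_exp_ofReal_mul_I _)
    hθ.injOn fun k => ?_
  convert hB (θ * k) using 4 with n
  rw [← exp_nat_mul]
  push_cast
  ring_nf

end MeanValue

theorem summable_mul_of_summable_sq {ι : Type*} {f g : ι → ℝ} (hf : Summable fun n => f n ^ 2)
    (hg : Summable fun n => g n ^ 2) : Summable fun n => f n * g n :=
  .of_norm_bounded ((hf.add hg).div_const 2) fun n => by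
    rw [norm_mul, Real.norm_eq_abs, Real.norm_eq_abs, ← sq_abs (f n), ← sq_abs (g n)]
    linarith [two_mul_le_add_sq |f n| |g n|]

theorem summable_of_forall_sum_Ico_le {f : ℕ → ℝ} (hf : ∀ n, 0 ≤ f n) {M : ℕ} {C : ℝ}
    (h : ∀ N, M ≤ N → ∑ n ∈ Ico M N, f n ≤ C) : Summable f := by
  refine (summable_nat_add_iff M).mp
    (summable_of_sum_range_le (c := C) (fun n => hf _) fun N => ?_)
  simpa [sum_Ico_eq_sum_range, add_comm] using h (M + N) (by omega)

theorem div_natCast_add_one_cpow (x : ℂ) (n : ℕ) (σ t : ℝ) :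
    x / ((n : ℂ) + 1) ^ ((σ : ℂ) + t * I)
      = x / ((n : ℂ) + 1) ^ (σ : ℂ) * exp ((-Real.log (n + 1) * t : ℝ) * I) := by
  have hn : (n : ℂ) + 1 ≠ 0 := by exact_mod_cast n.succ_ne_zero
  have hlog : log ((n : ℂ) + 1) = (Real.log (n + 1) : ℝ) := by
    rw [ofReal_log (by positivity)]
    push_cast
    rfl
  rw [cpow_add _ _ hn, cpow_def_of_ne_zero hn (t * I), hlog, div_mul_eq_div_div,
    div_eq_mul_inv _ (exp _), ← exp_neg]
  push_cast
  ring_nf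

theorem dirichletPartial_sub_dirichletPartial (a : ℕ → ℂ) (σ t : ℝ) {M N : ℕ} (h : M ≤ N) :
    dirichletPartial a (σ + t * I) N - dirichletPartial a (σ + t * I) M
      = ∑ n ∈ Ico M N,
          a (n + 1) / ((n : ℂ) + 1) ^ (σ : ℂ) * exp ((-Real.log (n + 1) * t : ℝ) * I) := by
  rw [dirichletPartial, dirichletPartial, ← sum_Ico_eq_sub _ h]
  exact sum_congr rfl fun n _ => div_natCast_add_one_cpow _ n σ t

theorem DirichletConvergesUniformlyAt.exists_forall_norm_sub_le {a : ℕ → ℂ} {σ : ℝ}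
    (h : DirichletConvergesUniformlyAt a σ) :
    ∃ M, ∀ N ≥ M, ∀ t : ℝ,
      ‖dirichletPartial a (σ + t * I) N - dirichletPartial a (σ + t * I) M‖ ≤ 1 := by
  obtain ⟨g, hg⟩ := h
  obtain ⟨M, hM⟩ := Metric.uniformCauchySeqOn_iff.mp
    (tendstoUniformlyOn_univ.mpr hg).uniformCauchySeqOn 1 one_pos
  exact ⟨M, fun N hN t => (dist_eq_norm _ _).symm.trans_le (hM N hN M le_rfl t trivial).le⟩

theorem DirichletConvergesUniformlyAt.summable_sq {a : ℕ → ℂ} {σ : ℝ}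
    (h : DirichletConvergesUniformlyAt a σ) :
    Summable fun n : ℕ => (‖a (n + 1)‖ / ((n : ℝ) + 1) ^ σ) ^ 2 := by
  obtain ⟨M, hM⟩ := h.exists_forall_norm_sub_le
  have hlog : Function.Injective fun n : ℕ => -Real.log (n + 1) := fun m n hmn => by
    have := Real.log_injOn_pos (by positivity : (0 : ℝ) < m + 1) (by positivity : (0 : ℝ) < n + 1)
      (neg_inj.mp hmn)
    exact_mod_cast add_right_cancel this
  refine summable_of_forall_sum_Ico_le (fun n => sq_nonneg _) (M := M) (C := 1 ^ 2) fun N hN => ?_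
  have := sum_norm_sq_le_of_forall_norm_sum_exp_le (Ico M N)
    (fun n => a (n + 1) / ((n : ℂ) + 1) ^ (σ : ℂ)) hlog fun t =>
      (dirichletPartial_sub_dirichletPartial a σ t hN).symm ▸ hM N hN t
  have hnorm (n : ℕ) : ‖(n : ℂ) + 1‖ = n + 1 := by exact_mod_cast norm_natCast (n + 1)
  simpa [norm_div, hnorm] using this

/-- `σ_a - σ_b ≤ 1/2`: if the Dirichlet series converges uniformly in `t` at
abscissa `σ`, then it converges absolutely at `σ + 1/2 + ε` for every `ε > 0`. -/
theorem sigmaA_sub_sigmaB_le_half (a : ℕ → ℂ) (σ : ℝ)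
    (h : DirichletConvergesUniformlyAt a σ) (ε : ℝ) (hε : 0 < ε) :
    DirichletAbsConvergesAt a (σ + 1 / 2 + ε) := by
  have hdecay : Summable fun n : ℕ => (((n : ℝ) + 1) ^ (-(1 / 2 + ε))) ^ 2 := by
    refine ((Real.summable_one_div_nat_add_rpow 1 (1 + 2 * ε)).mpr (by linarith)).congr
      fun n => ?_
    have hn : (0 : ℝ) < n + 1 := by positivity
    rw [abs_of_pos hn, ← Real.rpow_natCast, ← Real.rpow_mul hn.le, one_div, ← Real.rpow_neg hn.le]
    ring_nf
  refine (summable_mul_of_summable_sq h.summable_sq hdecay).congr fun n => ?_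
  have hn : (0 : ℝ) < n + 1 := by positivity
  rw [Real.rpow_neg hn.le, ← div_eq_mul_inv, div_div, ← Real.rpow_add hn]
  ring_nf
end

section
/- Let a : ℕ → ℂ be such that the series Σ_{n=1}^∞ a_n diverges. Then the abscissa of convergence of f(s) = Σ_{n=1}^∞ a_n n^{-s} is given by the Cauchy–Hadamard type formula σ_c(f) = limsup_{x → ∞} (1/log x) · log |Σ_{n ≤ x} a_n|. -/
/-!
Write `A(x) = ∑_{n ≤ x} a_n`. Partial summation gives both directions: `A(N) = O(N^θ)` forces
convergence of `∑ a_n n^{-σ}` for every `σ > max θ 0`, and convergence at `σ ≥ 0` forces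
`A(N) = O(N^σ)`. As `∑ a_n` diverges, every point of convergence is positive (convergence
propagates to the right), and every eventual upper bound `t` of `log |A(x)| / log x` is
nonnegative (`t < 0` would give `A(N) → 0`). So points of convergence and eventual upper bounds
are each other's `ε`-translates, and their infima, `σ_c` and the limsup, coincide.
-/

open Filter Topology

open Finset Asymptotics

/-- `partialSum a N = a 1 + ⋯ + a N`; the coefficient `a 0` never enters. -/
def partialSum {R : Type*} [AddCommMonoid R] (a : ℕ → R) (N : ℕ) : R :=
  ∑ n ∈ range N, a (n + 1)

lemma partialSum_succ {R : Type*} [AddCommMonoid R] (a : ℕ → R) (N : ℕ) :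
    partialSum a (N + 1) = partialSum a N + a (N + 1) :=
  sum_range_succ _ _

lemma sum_range_mul_by_parts {R : Type*} [CommRing R] (a w : ℕ → R) (N : ℕ) :
    ∑ n ∈ range N, a (n + 1) * w (n + 1) =
      partialSum a N * w N + ∑ n ∈ range N, partialSum a n * (w n - w (n + 1)) := by
  induction N with
  | zero => simp [partialSum]
  | succ N ih =>
    rw [sum_range_succ, ih, sum_range_succ, partialSum_succ]
    ring

lemma norm_sum_mul_le_of_monotone {b : ℕ → ℂ} {C : ℝ} (hb : ∀ n, ‖partialSum b n‖ ≤ C)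
    {w : ℕ → ℝ} (hw : Monotone w) (hw0 : 0 ≤ w 0) (N : ℕ) :
    ‖∑ n ∈ range N, b (n + 1) * (w (n + 1) : ℂ)‖ ≤ 2 * C * w N := by
  have hC : 0 ≤ C := (norm_nonneg _).trans (hb 0)
  rw [sum_range_mul_by_parts b (fun k => (w k : ℂ))]
  calc _ ≤ ‖partialSum b N * (w N : ℂ)‖ +
          ∑ n ∈ range N, ‖partialSum b n * ((w n : ℂ) - w (n + 1))‖ :=
        (norm_add_le _ _).trans (add_le_add_right (norm_sum_le _ _) _)
    _ ≤ C * w N + ∑ n ∈ range N, C * (w (n + 1) - w n) := by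
        gcongr with n
        · rw [norm_mul, Complex.norm_real, Real.norm_of_nonneg (hw0.trans (hw (Nat.zero_le N)))]
          exact mul_le_mul_of_nonneg_right (hb N) (hw0.trans (hw (Nat.zero_le N)))
        · rw [norm_mul, ← Complex.ofReal_sub, Complex.norm_real, Real.norm_eq_abs, abs_sub_comm,
            abs_of_nonneg (sub_nonneg.2 (hw n.le_succ))]
          exact mul_le_mul_of_nonneg_right (hb n) (sub_nonneg.2 (hw n.le_succ))
    _ = C * w N + C * (w N - w 0) := by rw [← mul_sum, sum_range_sub]
    _ ≤ 2 * C * w N := by nlinarith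

lemma abs_rpow_neg_sub_rpow_neg_le {p x : ℝ} (hp : 0 ≤ p) (hx : 0 < x) :
    |x ^ (-p) - (x + 1) ^ (-p)| ≤ p * x ^ (-p - 1) := by
  have hderiv : ∀ y ∈ Set.Icc x (x + 1), HasDerivAt (· ^ (-p)) (-p * y ^ (-p - 1)) y :=
    fun y hy => Real.hasDerivAt_rpow_const (Or.inl (hx.trans_le hy.1).ne')
  obtain ⟨c, hc, hslope⟩ := exists_hasDerivAt_eq_slope (· ^ (-p)) (fun y => -p * y ^ (-p - 1))
    (lt_add_one x) (fun y hy => (hderiv y hy).continuousAt.continuousWithinAt)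
    (fun y hy => hderiv y (Set.Ioo_subset_Icc_self hy))
  have hdiff : x ^ (-p) - (x + 1) ^ (-p) = p * c ^ (-p - 1) := by
    rw [add_sub_cancel_left, div_one] at hslope
    linear_combination hslope
  have hc0 : 0 < c := hx.trans hc.1
  rw [hdiff, abs_of_nonneg (by positivity)]
  exact mul_le_mul_of_nonneg_left (Real.rpow_le_rpow_of_nonpos hx hc.1.le (by linarith)) hp

lemma isBigO_natCast_rpow_neg_sub_rpow_neg {p : ℝ} (hp : 0 ≤ p) :
    (fun n : ℕ => (n : ℝ) ^ (-p) - ((n + 1 : ℕ) : ℝ) ^ (-p)) =O[atTop]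
      fun n => (n : ℝ) ^ (-p - 1) := by
  refine IsBigO.of_bound p ?_
  filter_upwards [eventually_gt_atTop 0] with n hn
  rw [Real.norm_eq_abs, Real.norm_of_nonneg (by positivity), Nat.cast_succ]
  exact abs_rpow_neg_sub_rpow_neg_le hp (Nat.cast_pos.2 hn)

lemma tendsto_natCast_rpow_of_neg {t : ℝ} (ht : t < 0) :
    Tendsto (fun N : ℕ => (N : ℝ) ^ t) atTop (𝓝 0) := by
  simpa [Function.comp_def] using
    (tendsto_rpow_neg_atTop (neg_pos.2 ht)).comp tendsto_natCast_atTop_atTop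

lemma dirichletPartial_eq_partialSum (a : ℕ → ℂ) (σ : ℝ) :
    dirichletPartial a σ = partialSum fun n => a n * (((n : ℝ) ^ (-σ) : ℝ) : ℂ) := by
  ext N
  refine sum_congr rfl fun n _ => ?_
  dsimp only
  rw [Real.rpow_neg (by positivity), Complex.ofReal_inv, Complex.ofReal_cpow (by positivity),
    div_eq_mul_inv]
  push_cast
  rfl

lemma dirichletPartial_zero (a : ℕ → ℂ) : dirichletPartial a 0 = partialSum a := by
  simpa using dirichletPartial_eq_partialSum a 0

lemma dirichletPartial_mul_rpow_neg (a : ℕ → ℂ) (σ τ : ℝ) :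
    dirichletPartial (fun n => a n * (((n : ℝ) ^ (-σ) : ℝ) : ℂ)) τ =
      dirichletPartial a ((σ + τ : ℝ) : ℂ) := by
  rw [dirichletPartial_eq_partialSum, dirichletPartial_eq_partialSum]
  ext N
  refine sum_congr rfl fun n _ => ?_
  dsimp only
  rw [mul_assoc, ← Complex.ofReal_mul, ← Real.rpow_add (by positivity), neg_add]

theorem DirichletConvergesAt.of_isBigO {a : ℕ → ℂ} {θ σ : ℝ} (hσ : 0 < σ) (hθσ : θ < σ)
    (ha : partialSum a =O[atTop] fun N => (N : ℝ) ^ θ) : DirichletConvergesAt a σ := by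
  set w : ℕ → ℝ := fun k => (k : ℝ) ^ (-σ)
  -- Abel summation: the boundary term is `O(N ^ (θ - σ))`, the remainder `O(n ^ (θ - σ - 1))`.
  have hboundary : Tendsto (fun N => partialSum a N * (w N : ℂ)) atTop (𝓝 0) := by
    have hw : (fun N => (w N : ℂ)) =O[atTop] w := Complex.isBigO_ofReal_left.2 (isBigO_refl _ _)
    refine ((ha.mul hw).congr_right fun N => (Real.rpow_add' (Nat.cast_nonneg N) ?_).symm)
      |>.trans_tendsto (tendsto_natCast_rpow_of_neg (by linarith : θ + -σ < 0))
    linarith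
  have hsummable : Summable fun n => partialSum a n * ((w n : ℂ) - w (n + 1)) := by
    refine summable_of_isBigO_nat (Real.summable_nat_rpow.2 (by linarith : θ + (-σ - 1) < -1)) ?_
    have hw : (fun n => ((w n : ℂ) - w (n + 1))) =O[atTop] fun n : ℕ => (n : ℝ) ^ (-σ - 1) := by
      simpa only [Complex.ofReal_sub] using
        Complex.isBigO_ofReal_left.2 (isBigO_natCast_rpow_neg_sub_rpow_neg hσ.le)
    refine (ha.mul hw).congr_right fun N => (Real.rpow_add' (Nat.cast_nonneg N) ?_).symm
    linarith
  refine ⟨_, (hboundary.add hsummable.hasSum.tendsto_sum_nat).congr fun N => ?_⟩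
  rw [dirichletPartial_eq_partialSum]
  exact (sum_range_mul_by_parts a (fun k => (w k : ℂ)) N).symm

theorem DirichletConvergesAt.mono {a : ℕ → ℂ} {σ σ' : ℝ} (ha : DirichletConvergesAt a σ)
    (hσσ' : σ < σ') : DirichletConvergesAt a σ' := by
  obtain ⟨l, hl⟩ := ha
  -- `a n * n ^ (-σ)` has bounded partial sums; its series at `σ' - σ` is that of `a` at `σ'`.
  have hbounded : (partialSum fun n => a n * (((n : ℝ) ^ (-σ) : ℝ) : ℂ)) =O[atTop]
      fun N => (N : ℝ) ^ (0 : ℝ) := by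
    simpa [← dirichletPartial_eq_partialSum] using hl.isBigO_one ℝ
  obtain ⟨l', hl'⟩ := DirichletConvergesAt.of_isBigO (sub_pos.2 hσσ') (sub_pos.2 hσσ') hbounded
  refine ⟨l', ?_⟩
  rwa [dirichletPartial_mul_rpow_neg, add_sub_cancel] at hl'

theorem DirichletConvergesAt.isBigO_partialSum {a : ℕ → ℂ} {σ : ℝ} (hσ : 0 ≤ σ)
    (ha : DirichletConvergesAt a σ) : partialSum a =O[atTop] fun N => (N : ℝ) ^ σ := by
  obtain ⟨l, hl⟩ := ha
  obtain ⟨C, hC⟩ := hl.norm.bddAbove_range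
  set b : ℕ → ℂ := fun n => a n * (((n : ℝ) ^ (-σ) : ℝ) : ℂ)
  have hb : ∀ n, ‖partialSum b n‖ ≤ C := fun n => by
    rw [← dirichletPartial_eq_partialSum]
    exact hC ⟨n, rfl⟩
  have hmono : Monotone fun k : ℕ => (k : ℝ) ^ σ := fun m n hmn =>
    Real.rpow_le_rpow (Nat.cast_nonneg m) (Nat.cast_le.2 hmn) hσ
  refine IsBigO.of_bound (2 * C) (Eventually.of_forall fun N => ?_)
  have hsplit :
      partialSum a N = ∑ n ∈ range N, b (n + 1) * ((((n + 1 : ℕ) : ℝ) ^ σ : ℝ) : ℂ) := by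
    refine sum_congr rfl fun n _ => ?_
    rw [mul_assoc, ← Complex.ofReal_mul, ← Real.rpow_add (by positivity), neg_add_cancel,
      Real.rpow_zero, Complex.ofReal_one, mul_one]
  rw [hsplit, Real.norm_of_nonneg (by positivity)]
  exact norm_sum_mul_le_of_monotone hb hmono (by positivity) N

lemma log_div_log_le_iff {x y t : ℝ} (hx : 1 < x) (hy : 0 < y) :
    Real.log y / Real.log x ≤ t ↔ y ≤ x ^ t := by
  rw [div_le_iff₀ (Real.log_pos hx), Real.le_rpow_iff_log_le hy (by linarith)]

lemma isBigO_partialSum_of_eventually_log_div_log_le {a : ℕ → ℂ} {t : ℝ}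
    (ha : ∀ᶠ x : ℝ in atTop, Real.log ‖partialSum a ⌊x⌋₊‖ / Real.log x ≤ t) :
    partialSum a =O[atTop] fun N => (N : ℝ) ^ t := by
  refine IsBigO.of_bound 1 ?_
  filter_upwards [tendsto_natCast_atTop_atTop.eventually (ha.and (eventually_gt_atTop 1))]
    with N ⟨hN, hN1⟩
  rw [Nat.floor_natCast] at hN
  rw [one_mul, Real.norm_of_nonneg (by positivity)]
  rcases (norm_nonneg (partialSum a N)).eq_or_lt with h0 | hpos
  · rw [← h0]
    positivity
  · exact (log_div_log_le_iff hN1 hpos).1 hN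

lemma eventually_log_div_log_le_of_isBigO {a : ℕ → ℂ} {σ ε : ℝ} (hσ : 0 ≤ σ) (hε : 0 < ε)
    (ha : partialSum a =O[atTop] fun N => (N : ℝ) ^ σ) :
    ∀ᶠ x : ℝ in atTop, Real.log ‖partialSum a ⌊x⌋₊‖ / Real.log x ≤ σ + ε := by
  obtain ⟨C, hC⟩ := ha.bound
  filter_upwards [tendsto_nat_floor_atTop.eventually hC, eventually_gt_atTop 1,
    (tendsto_rpow_atTop hε).eventually_ge_atTop C] with x hbound hx hCx
  rcases (norm_nonneg (partialSum a ⌊x⌋₊)).eq_or_lt with h0 | hpos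
  · rw [← h0, Real.log_zero, zero_div]
    positivity
  have hfloor : ‖(⌊x⌋₊ : ℝ) ^ σ‖ ≤ x ^ σ := by
    rw [Real.norm_of_nonneg (by positivity)]
    exact Real.rpow_le_rpow (Nat.cast_nonneg _) (Nat.floor_le (by linarith)) hσ
  rw [log_div_log_le_iff hx hpos, Real.rpow_add (by linarith), mul_comm]
  exact hbound.trans (mul_le_mul hCx hfloor (norm_nonneg _) (by positivity))

lemma sInf_eq_sInf_of_forall_add_mem {A B : Set ℝ} (hA : BddBelow A) (hB : BddBelow B)
    (hAB : ∀ a ∈ A, ∀ ε > 0, a + ε ∈ B) (hBA : ∀ b ∈ B, ∀ ε > 0, b + ε ∈ A) :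
    sInf A = sInf B := by
  -- Includes `A = B = ∅`, where both infima are the junk value `0`.
  have key : ∀ {A B : Set ℝ}, BddBelow A → B.Nonempty → (∀ b ∈ B, ∀ ε > 0, b + ε ∈ A) →
      sInf A ≤ sInf B := fun hA hB hBA => le_csInf hB fun b hb =>
    le_of_forall_pos_le_add fun ε hε => csInf_le hA (hBA b hb ε hε)
  rcases B.eq_empty_or_nonempty with rfl | hBne
  · rw [Set.eq_empty_of_forall_notMem fun a ha => hAB a ha 1 one_pos]
  · obtain ⟨b, hb⟩ := hBne
    exact (key hA ⟨b, hb⟩ hBA).antisymm (key hB ⟨_, hBA b hb 1 one_pos⟩ hAB)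

/-- Cauchy–Hadamard formula for the abscissa of convergence, assuming that
`∑ a_n` diverges. -/
theorem sigmaC_cauchy_hadamard (a : ℕ → ℂ)
    (h : ¬ ∃ l : ℂ, Tendsto (fun N => ∑ n ∈ Finset.range N, a (n + 1)) atTop (𝓝 l)) :
    sigmaC a =
      limsup (fun x : ℝ =>
        Real.log ‖∑ n ∈ Finset.range ⌊x⌋₊, a (n + 1)‖ / Real.log x) atTop := by
  have hconv_pos : ∀ σ, DirichletConvergesAt a σ → 0 < σ := by
    intro σ hσ
    by_contra! hσ0
    have h0 : DirichletConvergesAt a 0 := hσ0.eq_or_lt.elim (fun heq => heq ▸ hσ) hσ.mono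
    obtain ⟨l, hl⟩ := h0
    rw [Complex.ofReal_zero, dirichletPartial_zero] at hl
    exact h ⟨l, hl⟩
  have hbound_nonneg : ∀ t, (∀ᶠ x : ℝ in atTop, Real.log ‖partialSum a ⌊x⌋₊‖ / Real.log x ≤ t) →
      0 ≤ t := by
    intro t ht
    by_contra! ht0
    exact h ⟨0, (isBigO_partialSum_of_eventually_log_div_log_le ht).trans_tendsto
      (tendsto_natCast_rpow_of_neg ht0)⟩
  rw [sigmaC, limsup_eq]
  refine sInf_eq_sInf_of_forall_add_mem ⟨0, fun σ hσ => (hconv_pos σ hσ).le⟩ ⟨0, hbound_nonneg⟩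
    (fun σ hσ ε hε => ?_) (fun t ht ε hε => ?_)
  · have hσ0 := (hconv_pos σ hσ).le
    exact eventually_log_div_log_le_of_isBigO hσ0 hε (hσ.isBigO_partialSum hσ0)
  · have ht0 := hbound_nonneg t ht
    exact .of_isBigO (by linarith) (by linarith) (isBigO_partialSum_of_eventually_log_div_log_le ht)
end

section
/- Let a : ℕ → ℂ be such that the series Σ_{n=1}^∞ |a_n| diverges. Then the abscissa of absolute convergence of f(s) = Σ_{n=1}^∞ a_n n^{-s} is given by the Cauchy–Hadamard type formula σ_a(f) = limsup_{x → ∞} (1/log x) · log (Σ_{n ≤ x} |a_n|). -/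
/-!
Write `b n = ‖a (n + 1)‖` and `S N = ∑_{n < N} b n`; divergence of `∑ b n` means `S N → ∞`.
If `∑ b n (n + 1)^{-σ}` converges to `T`, then `S x ≤ T x^σ`, so `log S(x) / log x` is eventually
below every `c > σ`. Conversely, if `S N ≤ C N^c` and `c < σ`, the dyadic block
`2^k ≤ n + 1 < 2^{k+1}` of `∑ b n (n + 1)^{-σ}` is at most `C 2^c (2^{c-σ})^k`, a geometric series.
Hence the abscissae of absolute convergence and the eventual upper bounds of `log S(x) / log x`
have the same strict upper neighbours, hence the same lower bounds, hence the same infimum; in `ℝ`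
the identity `sInf s = sSup (lowerBounds s)` also holds for the empty and the unbounded sets, where
both `sigmaA` and `limsup` take the junk value `0`.
-/

open Filter Topology

open Finset

theorem lowerBounds_eq_of_forall_lt_mem {α : Type*} [LinearOrder α] [DenselyOrdered α]
    {s t : Set α} (hst : ∀ x ∈ s, ∀ y, x < y → y ∈ t) (hts : ∀ y ∈ t, ∀ x, y < x → x ∈ s) :
    lowerBounds s = lowerBounds t := by
  have key : ∀ {s t : Set α}, (∀ y ∈ t, ∀ x, y < x → x ∈ s) → lowerBounds s ⊆ lowerBounds t :=
    fun hts _ hz y hy => le_of_forall_gt_imp_ge_of_dense fun x hyx => hz (hts y hy x hyx)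
  exact (key hts).antisymm (key hst)

theorem Real.sInf_eq_sSup_lowerBounds (s : Set ℝ) : sInf s = sSup (lowerBounds s) := by
  rcases s.eq_empty_or_nonempty with rfl | hs
  · simp
  by_cases hbdd : BddBelow s
  · exact (csSup_lowerBounds_eq_csInf hbdd hs).symm
  · rw [Real.sInf_of_not_bddBelow hbdd, Set.not_nonempty_iff_eq_empty.mp hbdd, Real.sSup_empty]

section PartialSums

variable {b : ℕ → ℝ}

theorem tendsto_sum_range_floor_atTop (hb : ∀ n, 0 ≤ b n) (h : ¬ Summable b) :
    Tendsto (fun x : ℝ => ∑ n ∈ range ⌊x⌋₊, b n) atTop atTop :=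
  ((not_summable_iff_tendsto_nat_atTop_of_nonneg hb).mp h).comp tendsto_nat_floor_atTop

theorem nonneg_of_summable_div_rpow (hb : ∀ n, 0 ≤ b n) (h : ¬ Summable b) {σ : ℝ}
    (hσ : Summable fun n : ℕ => b n / ((n : ℝ) + 1) ^ σ) : 0 ≤ σ := by
  by_contra! hσ0
  refine h (hσ.of_nonneg_of_le hb fun n => ?_)
  have hpow : ((n : ℝ) + 1) ^ σ ≤ 1 :=
    Real.rpow_le_one_of_one_le_of_nonpos (by linarith [n.cast_nonneg (α := ℝ)]) hσ0.le
  exact (le_div_iff₀ (by positivity)).mpr (mul_le_of_le_one_right (hb n) hpow)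

theorem sum_range_floor_le_tsum_div_rpow_mul_rpow (hb : ∀ n, 0 ≤ b n) {σ x : ℝ} (hσ : 0 ≤ σ)
    (hsum : Summable fun n : ℕ => b n / ((n : ℝ) + 1) ^ σ) (hx : 0 ≤ x) :
    ∑ n ∈ range ⌊x⌋₊, b n ≤ (∑' n : ℕ, b n / ((n : ℝ) + 1) ^ σ) * x ^ σ := by
  have hterm : ∀ n ∈ range ⌊x⌋₊, b n ≤ b n / ((n : ℝ) + 1) ^ σ * x ^ σ := by
    intro n hn
    have hn1 : (n : ℝ) + 1 ≤ x :=
      calc (n : ℝ) + 1 ≤ ⌊x⌋₊ := by exact_mod_cast mem_range.mp hn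
        _ ≤ x := Nat.floor_le hx
    have hpos : 0 < ((n : ℝ) + 1) ^ σ := by positivity
    calc b n = b n / ((n : ℝ) + 1) ^ σ * ((n : ℝ) + 1) ^ σ := (div_mul_cancel₀ _ hpos.ne').symm
      _ ≤ b n / ((n : ℝ) + 1) ^ σ * x ^ σ := by have := hb n; gcongr
  calc ∑ n ∈ range ⌊x⌋₊, b n ≤ (∑ n ∈ range ⌊x⌋₊, b n / ((n : ℝ) + 1) ^ σ) * x ^ σ := by
        rw [sum_mul]; exact sum_le_sum hterm
    _ ≤ (∑' n : ℕ, b n / ((n : ℝ) + 1) ^ σ) * x ^ σ := by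
        gcongr
        exact hsum.sum_le_tsum _ fun n _ => div_nonneg (hb n) (by positivity)

theorem eventually_log_sum_range_floor_div_log_le (hb : ∀ n, 0 ≤ b n) (h : ¬ Summable b)
    {σ c : ℝ} (hσ : Summable fun n : ℕ => b n / ((n : ℝ) + 1) ^ σ) (hσc : σ < c) :
    ∀ᶠ x : ℝ in atTop, Real.log (∑ n ∈ range ⌊x⌋₊, b n) / Real.log x ≤ c := by
  have hσ0 := nonneg_of_summable_div_rpow hb h hσ
  set T := ∑' n : ℕ, b n / ((n : ℝ) + 1) ^ σ
  filter_upwards [(tendsto_sum_range_floor_atTop hb h).eventually_gt_atTop 0,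
    Real.tendsto_log_atTop.eventually_ge_atTop (Real.log T / (c - σ)),
    eventually_gt_atTop 1] with x hS hlogx hx
  have hbound := sum_range_floor_le_tsum_div_rpow_mul_rpow hb hσ0 hσ (by linarith)
  have hxσ : 0 < x ^ σ := by positivity
  have hT : 0 < T := (mul_pos_iff_of_pos_right hxσ).mp (hS.trans_le hbound)
  rw [div_le_iff₀ (Real.log_pos hx)]
  calc Real.log (∑ n ∈ range ⌊x⌋₊, b n) ≤ Real.log (T * x ^ σ) := Real.log_le_log hS hbound
    _ = Real.log T + σ * Real.log x := by
        rw [Real.log_mul hT.ne' hxσ.ne', Real.log_rpow (by linarith)]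
    _ ≤ c * Real.log x := by
        have := (div_le_iff₀ (sub_pos.2 hσc)).mp hlogx
        linarith

theorem exists_sum_range_le_mul_rpow (hb : ∀ n, 0 ≤ b n) {c : ℝ} (hc : 0 ≤ c)
    (h : ∀ᶠ N : ℕ in atTop, ∑ n ∈ range N, b n ≤ (N : ℝ) ^ c) :
    ∃ C, ∀ N : ℕ, ∑ n ∈ range N, b n ≤ C * (N : ℝ) ^ c := by
  obtain ⟨M, hM⟩ := eventually_atTop.mp h
  refine ⟨max 1 (∑ n ∈ range M, b n), fun N => ?_⟩
  rcases le_total M N with hMN | hNM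
  · exact (hM N hMN).trans (le_mul_of_one_le_left (by positivity) (le_max_left _ _))
  rcases N.eq_zero_or_pos with rfl | hN
  · simp only [range_zero, sum_empty, Nat.cast_zero]
    positivity
  calc ∑ n ∈ range N, b n ≤ ∑ n ∈ range M, b n :=
        sum_le_sum_of_subset_of_nonneg (range_mono hNM) fun n _ _ => hb n
    _ ≤ max 1 (∑ n ∈ range M, b n) := le_max_right _ _
    _ ≤ max 1 (∑ n ∈ range M, b n) * (N : ℝ) ^ c :=
        le_mul_of_one_le_right (by positivity) (Real.one_le_rpow (by exact_mod_cast hN) hc)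

section Dyadic

variable {C τ σ : ℝ} (hb : ∀ n, 0 ≤ b n) (hσ : 0 ≤ σ)
  (hS : ∀ N : ℕ, ∑ n ∈ range N, b n ≤ C * (N : ℝ) ^ τ)
include hb hσ hS

theorem sum_Ico_two_pow_div_rpow_le (K : ℕ) :
    ∑ n ∈ Ico (2 ^ K - 1) (2 ^ (K + 1) - 1), b n / ((n : ℝ) + 1) ^ σ ≤
      C * 2 ^ τ * ((2 : ℝ) ^ (τ - σ)) ^ K := by
  calc ∑ n ∈ Ico (2 ^ K - 1) (2 ^ (K + 1) - 1), b n / ((n : ℝ) + 1) ^ σ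
      ≤ ∑ n ∈ Ico (2 ^ K - 1) (2 ^ (K + 1) - 1), b n / ((2 : ℝ) ^ K) ^ σ := by
        refine sum_le_sum fun n hn => ?_
        have h2K : (2 : ℝ) ^ K ≤ n + 1 := by
          have := (mem_Ico.mp hn).1
          have : 2 ^ K ≤ n + 1 := by have := K.one_le_two_pow; omega
          exact_mod_cast this
        have := hb n
        gcongr
    _ ≤ (∑ n ∈ range (2 ^ (K + 1)), b n) / ((2 : ℝ) ^ K) ^ σ := by
        rw [← sum_div]
        refine div_le_div_of_nonneg_right
          (sum_le_sum_of_subset_of_nonneg (fun n hn => ?_) fun n _ _ => hb n) (by positivity)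
        simp only [mem_Ico, mem_range] at hn ⊢
        omega
    _ ≤ C * (((2 ^ (K + 1) : ℕ) : ℝ)) ^ τ / ((2 : ℝ) ^ K) ^ σ := by gcongr; exact hS _
    _ = C * 2 ^ τ * ((2 : ℝ) ^ (τ - σ)) ^ K := by
        rw [Nat.cast_pow, Nat.cast_ofNat, pow_succ, Real.mul_rpow (by positivity) (by norm_num),
          Real.rpow_pow_comm (by norm_num), Real.rpow_sub (by positivity)]
        ring

theorem sum_range_two_pow_sub_one_div_rpow_le (K : ℕ) :
    ∑ n ∈ range (2 ^ K - 1), b n / ((n : ℝ) + 1) ^ σ ≤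
      C * 2 ^ τ * ∑ k ∈ range K, ((2 : ℝ) ^ (τ - σ)) ^ k := by
  induction K with
  | zero => simp
  | succ K ih =>
    have hmono : 2 ^ K - 1 ≤ 2 ^ (K + 1) - 1 := by rw [pow_succ]; omega
    rw [← sum_range_add_sum_Ico _ hmono, sum_range_succ, mul_add]
    exact add_le_add ih (sum_Ico_two_pow_div_rpow_le hb hσ hS K)

theorem summable_div_rpow_of_sum_range_le_mul_rpow (hτσ : τ < σ) :
    Summable fun n : ℕ => b n / ((n : ℝ) + 1) ^ σ := by
  have hC : 0 ≤ C := by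
    have hS1 := hS 1
    simp only [range_one, sum_singleton, Nat.cast_one, Real.one_rpow, mul_one] at hS1
    exact (hb 0).trans hS1
  set q : ℝ := 2 ^ (τ - σ)
  have hq0 : 0 < q := by positivity
  have hq1 : q < 1 := Real.rpow_lt_one_of_one_lt_of_neg one_lt_two (by linarith)
  refine summable_of_sum_range_le (c := C * 2 ^ τ * (1 - q)⁻¹)
    (fun n => by have := hb n; positivity) fun N => ?_
  calc ∑ n ∈ range N, b n / ((n : ℝ) + 1) ^ σ
      ≤ ∑ n ∈ range (2 ^ N - 1), b n / ((n : ℝ) + 1) ^ σ := by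
        refine sum_le_sum_of_subset_of_nonneg (range_mono ?_) fun n _ _ => ?_
        · have := N.lt_two_pow_self; omega
        · have := hb n; positivity
    _ ≤ C * 2 ^ τ * ∑ k ∈ range N, q ^ k := sum_range_two_pow_sub_one_div_rpow_le hb hσ hS N
    _ ≤ C * 2 ^ τ * (1 - q)⁻¹ := by
        gcongr
        simpa using geom_sum_Ico_le_of_lt_one (m := 0) (n := N) hq0.le hq1

end Dyadic

theorem summable_div_rpow_of_eventually_log_sum_range_floor_div_log_le (hb : ∀ n, 0 ≤ b n)
    (h : ¬ Summable b) {c σ : ℝ}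
    (hc : ∀ᶠ x : ℝ in atTop, Real.log (∑ n ∈ range ⌊x⌋₊, b n) / Real.log x ≤ c) (hcσ : c < σ) :
    Summable fun n : ℕ => b n / ((n : ℝ) + 1) ^ σ := by
  have hlarge := hc.and (((tendsto_sum_range_floor_atTop hb h).eventually_ge_atTop 1).and
    (eventually_gt_atTop 1))
  have hc0 : 0 ≤ c := by
    obtain ⟨x, hx, hS, hx1⟩ := hlarge.exists
    exact (div_nonneg (Real.log_nonneg hS) (Real.log_nonneg hx1.le)).trans hx
  have hpow : ∀ᶠ N : ℕ in atTop, ∑ n ∈ range N, b n ≤ (N : ℝ) ^ c := by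
    filter_upwards [tendsto_natCast_atTop_atTop.eventually hlarge] with N ⟨hN, hSN, hN1⟩
    rw [Nat.floor_natCast] at hN hSN
    rw [Real.le_rpow_iff_log_le (by linarith) (by linarith)]
    exact (div_le_iff₀ (Real.log_pos hN1)).mp hN
  obtain ⟨C, hC⟩ := exists_sum_range_le_mul_rpow hb hc0 hpow
  exact summable_div_rpow_of_sum_range_le_mul_rpow hb (hc0.trans hcσ.le) hC hcσ

end PartialSums

/-- Cauchy–Hadamard formula for the abscissa of absolute convergence,
assuming that `∑ |a_n|` diverges. -/
theorem sigmaA_cauchy_hadamard (a : ℕ → ℂ)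
    (h : ¬ Summable fun n : ℕ => ‖a (n + 1)‖) :
    sigmaA a =
      limsup (fun x : ℝ =>
        Real.log (∑ n ∈ Finset.range ⌊x⌋₊, ‖a (n + 1)‖) / Real.log x) atTop := by
  have hb : ∀ n, 0 ≤ ‖a (n + 1)‖ := fun n => norm_nonneg _
  rw [limsup_eq, sigmaA, Real.sInf_eq_sSup_lowerBounds, Real.sInf_eq_sSup_lowerBounds]
  congr 1
  exact lowerBounds_eq_of_forall_lt_mem
    (fun σ hσ c hσc => eventually_log_sum_range_floor_div_log_le hb h hσ hσc)
    (fun c hc σ hcσ => summable_div_rpow_of_eventually_log_sum_range_floor_div_log_le hb h hc hcσ)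
end

section
/- Let a : ℕ → ℂ be such that the Dirichlet series f(s) = Σ_{n=1}^∞ a_n n^{-s} does not converge at s = 0. Then the abscissa of uniform convergence is given by the Cauchy–Hadamard type formula σ_b(f) = limsup_{x → ∞} (1/log x) · log ( sup_{t ∈ ℝ} |Σ_{n ≤ x} a_n n^{-it}| ). -/
/-!
Write `A(N) = sup_t |∑_{n ≤ N} a_n n^{-it}|` and `L` for the limsup. Both inequalities are
summation by parts. If `ρ > L`, then `A(N) ≤ N^ρ` for large `N`, and summing by parts against the
weights `n^{-σ}`, `σ > ρ`, dominates the tails of the series at `σ + it` by a convergent series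
independent of `t`; so the series converges uniformly at `σ`. Conversely, uniform convergence at
`σ` bounds the partial sums at `σ + it` by some `C`, and summing by parts against the increasing
weights `n^σ` gives `A(N) ≤ 2C N^σ`, so `L ≤ σ`. Divergence at `0` makes every abscissa involved
nonnegative: by Dirichlet's test convergence at `σ` propagates to all `τ > σ`, so uniform
convergence only happens at `σ > 0`, and `L < 0` would give uniform convergence at `0`.
-/

open Filter Topology

open Finset

section AbelSummation

variable {E : Type*} [NormedAddCommGroup E] [NormedSpace ℝ E]

theorem norm_sum_range_succ_smul_le_of_monotone {f : ℕ → ℝ} {z : ℕ → E} {b : ℝ}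
    (hf : Monotone f) (hf0 : 0 ≤ f 0) (hz : ∀ k, ‖∑ i ∈ range k, z i‖ ≤ b) (n : ℕ) :
    ‖∑ i ∈ range (n + 1), f i • z i‖ ≤ 2 * b * f n := by
  have hb : 0 ≤ b := (norm_nonneg _).trans (hz 0)
  have hfn : 0 ≤ f n := hf0.trans (hf n.zero_le)
  have hstep : ∀ i, 0 ≤ f (i + 1) - f i := fun i => sub_nonneg.2 (hf i.le_succ)
  rw [sum_range_by_parts, Nat.add_sub_cancel]
  calc _ ≤ ‖f n • ∑ i ∈ range (n + 1), z i‖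
        + ‖∑ i ∈ range n, (f (i + 1) - f i) • ∑ j ∈ range (i + 1), z j‖ := norm_sub_le _ _
    _ ≤ f n * b + ∑ i ∈ range n, (f (i + 1) - f i) * b := by
        gcongr
        · rw [norm_smul, Real.norm_of_nonneg hfn]
          exact mul_le_mul_of_nonneg_left (hz _) hfn
        · refine (norm_sum_le _ _).trans (sum_le_sum fun i _ => ?_)
          rw [norm_smul, Real.norm_of_nonneg (hstep i)]
          exact mul_le_mul_of_nonneg_left (hz _) (hstep i)
    _ ≤ 2 * b * f n := by
        rw [← sum_mul, sum_range_sub]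
        nlinarith

/-- A uniform version of the Abel–Dirichlet test. -/
theorem exists_tendstoUniformly_sum_range_smul [CompleteSpace E] {α : Type*} {f : ℕ → ℝ}
    {z : ℕ → α → E} {B : ℕ → ℝ} (hz : ∀ n x, ‖∑ i ∈ range n, z i x‖ ≤ B n)
    (hvar : Summable fun n => |f (n + 1) - f n| * B (n + 1))
    (hlim : Tendsto (fun n => |f n| * B (n + 1)) atTop (𝓝 0)) :
    ∃ g : α → E, TendstoUniformly (fun n x => ∑ i ∈ range n, f i • z i x) g atTop := by
  have hboundary : TendstoUniformly (fun n x => f n • ∑ i ∈ range (n + 1), z i x) 0 atTop := by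
    rw [Metric.tendstoUniformly_iff]
    intro ε hε
    filter_upwards [hlim.eventually (gt_mem_nhds hε)] with n hn x
    rw [Pi.zero_apply, dist_zero_left, norm_smul, Real.norm_eq_abs]
    exact (mul_le_mul_of_nonneg_left (hz _ x) (abs_nonneg _)).trans_lt hn
  have hseries := tendstoUniformly_tsum_nat
      (f := fun n x => (f (n + 1) - f n) • ∑ i ∈ range (n + 1), z i x) hvar (fun n x => by
    rw [norm_smul, Real.norm_eq_abs]
    exact mul_le_mul_of_nonneg_left (hz _ x) (abs_nonneg _))
  have hparts : (fun n x => ∑ i ∈ range (n + 1), f i • z i x) =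
      (fun n x => f n • ∑ i ∈ range (n + 1), z i x) -
        fun n x => ∑ i ∈ range n, (f (i + 1) - f i) • ∑ j ∈ range (i + 1), z j x := by
    ext n x
    rw [Pi.sub_apply, Pi.sub_apply, sum_range_by_parts, Nat.add_sub_cancel]
  have hshifted := hboundary.sub hseries
  rw [← hparts] at hshifted
  exact ⟨_, by rw [← map_add_atTop_eq_nat 1]; exact hshifted⟩

end AbelSummation

theorem TendstoUniformly.exists_forall_norm_le {α E : Type*} [SeminormedAddCommGroup E]
    {F : ℕ → α → E} {g : α → E} (h : TendstoUniformly F g atTop)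
    (hF : ∀ n, ∃ C, ∀ x, ‖F n x‖ ≤ C) : ∃ C, ∀ n x, ‖F n x‖ ≤ C := by
  choose C hC using hF
  obtain ⟨N, hN⟩ := eventually_atTop.1 (Metric.tendstoUniformly_iff.1 h 1 one_pos)
  have hCN : ∀ k ≤ N, C k ≤ ∑ j ∈ range (N + 1), |C j| := fun k hk =>
    (le_abs_self _).trans (single_le_sum (f := fun j => |C j|) (fun _ _ => abs_nonneg _)
      (mem_range.2 (Nat.lt_succ_of_le hk)))
  refine ⟨∑ j ∈ range (N + 1), |C j| + 2, fun n x => ?_⟩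
  rcases le_total n N with hn | hn
  · linarith [hC n x, hCN n hn]
  · have hnN : ‖F n x - F N x‖ < 2 := by
      rw [← dist_eq_norm]
      linarith [dist_triangle_left (F n x) (F N x) (g x), hN n hn x, hN N le_rfl x]
    linarith [norm_le_norm_add_norm_sub' (F n x) (F N x), hC N x, hCN N le_rfl]

theorem Real.sInf_eq_sInf_of_forall_lt_mem {S T : Set ℝ}
    (hST : ∀ s ∈ S, ∀ t, s < t → t ∈ T) (hTS : ∀ t ∈ T, ∀ s, t < s → s ∈ S) :
    sInf S = sInf T := by
  have lowerBounds_subset : ∀ {U V : Set ℝ}, (∀ u ∈ U, ∀ v, u < v → v ∈ V) →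
      lowerBounds V ⊆ lowerBounds U := fun hUV b hb u hu =>
    le_of_not_gt fun hub => by linarith [hb (hUV u hu ((u + b) / 2) (by linarith))]
  have hlb : lowerBounds S = lowerBounds T :=
    (lowerBounds_subset hTS).antisymm (lowerBounds_subset hST)
  rcases S.eq_empty_or_nonempty with rfl | hS
  · rw [Set.eq_empty_iff_forall_notMem.2 fun t ht => hTS t ht _ (lt_add_one t)]
  by_cases hbdd : BddBelow S
  · have hglb : IsGLB T (sInf S) := by
      rw [IsGLB, ← hlb]
      exact isGLB_csInf hS hbdd
    have ⟨s, hs⟩ := hS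
    exact (hglb.csInf_eq ⟨s + 1, hST s hs _ (lt_add_one s)⟩).symm
  · have hbddT : ¬ BddBelow T := by rwa [BddBelow, ← hlb]
    rw [Real.sInf_of_not_bddBelow hbdd, Real.sInf_of_not_bddBelow hbddT]

theorem Real.rpow_neg_sub_rpow_neg_add_one_le {σ x : ℝ} (hσ : 0 ≤ σ) (hx : 0 < x) :
    x ^ (-σ) - (x + 1) ^ (-σ) ≤ σ * x ^ (-σ - 1) := by
  set r := (x + 1) / x
  have hr : 0 < r := by positivity
  -- Bernoulli's inequality for the negative exponent, through `log r ≤ r - 1 = 1 / x`.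
  have hbernoulli : 1 - σ / x ≤ r ^ (-σ) := by
    have hlog : Real.log r ≤ 1 / x := by
      have := Real.log_le_sub_one_of_pos hr
      rwa [div_sub_one hx.ne', add_sub_cancel_left] at this
    have : σ * Real.log r ≤ σ / x := by
      rw [div_eq_mul_one_div]
      exact mul_le_mul_of_nonneg_left hlog hσ
    rw [Real.rpow_def_of_pos hr]
    linarith [Real.add_one_le_exp (Real.log r * -σ)]
  have hsplit : (x + 1) ^ (-σ) = x ^ (-σ) * r ^ (-σ) := by
    rw [← Real.mul_rpow hx.le hr.le, mul_div_cancel₀ _ hx.ne']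
  have hpow : x ^ (-σ - 1) = x ^ (-σ) / x := by
    rw [Real.rpow_sub hx, Real.rpow_one]
  rw [hsplit, hpow]
  have := mul_le_mul_of_nonneg_left hbernoulli (Real.rpow_nonneg hx.le (-σ))
  calc _ ≤ x ^ (-σ) - x ^ (-σ) * (1 - σ / x) := by linarith
    _ = _ := by ring

theorem tendsto_natCast_add_one_rpow_atTop_zero {p : ℝ} (hp : p < 0) :
    Tendsto (fun n : ℕ => ((n : ℝ) + 1) ^ p) atTop (𝓝 0) := by
  simpa [Function.comp_def] using (tendsto_rpow_neg_atTop (neg_pos.2 hp)).comp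
    (tendsto_atTop_add_const_right _ 1 tendsto_natCast_atTop_atTop)

theorem summable_natCast_add_one_rpow {p : ℝ} (hp : p < -1) :
    Summable fun n : ℕ => ((n : ℝ) + 1) ^ p := by
  simpa using (summable_nat_add_iff 1).2 (Real.summable_nat_rpow.2 hp)

section Growth

variable {A : ℕ → ℝ} {C ρ σ τ : ℝ}

theorem eventually_le_rpow_of_log_div_log_le
    (h : ∀ᶠ x : ℝ in atTop, Real.log (A ⌊x⌋₊) / Real.log x ≤ ρ) :
    ∀ᶠ N : ℕ in atTop, A N ≤ (N : ℝ) ^ ρ := by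
  filter_upwards [tendsto_natCast_atTop_atTop.eventually h, eventually_ge_atTop 2] with N hN hN2
  have hN1 : (1 : ℝ) < N := by exact_mod_cast hN2
  rw [Nat.floor_natCast, div_le_iff₀ (Real.log_pos hN1)] at hN
  rcases le_or_gt (A N) 0 with hA | hA
  · exact hA.trans (by positivity)
  · rwa [← Real.log_le_log_iff hA (by positivity), Real.log_rpow (by linarith)]

theorem eventually_log_div_log_le_of_le_rpow (hA0 : ∀ N, 0 ≤ A N) (hσ : 0 ≤ σ)
    (hστ : σ < τ) (h : ∀ᶠ N : ℕ in atTop, A N ≤ C * (N : ℝ) ^ σ) :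
    ∀ᶠ x : ℝ in atTop, Real.log (A ⌊x⌋₊) / Real.log x ≤ τ := by
  set K := max C 1
  have hK : 0 ≤ Real.log K := Real.log_nonneg (le_max_right _ _)
  have hlim : Tendsto (fun x => σ + Real.log K / Real.log x) atTop (𝓝 σ) := by
    simpa using (tendsto_const_nhds.div_atTop Real.tendsto_log_atTop).const_add σ
  filter_upwards [tendsto_nat_floor_atTop.eventually h, eventually_gt_atTop 1,
    hlim.eventually (gt_mem_nhds hστ)] with x hN hx hxτ
  set N := ⌊x⌋₊
  have hlogx : 0 < Real.log x := Real.log_pos hx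
  have hN0 : (0 : ℝ) < N := by exact_mod_cast Nat.floor_pos.2 hx.le
  have hlogN : Real.log N ≤ Real.log x := Real.log_le_log hN0 (Nat.floor_le (by linarith))
  have hlogA : Real.log (A N) ≤ Real.log K + σ * Real.log x := by
    rcases (hA0 N).eq_or_lt with hA | hA
    · rw [← hA, Real.log_zero]; positivity
    calc Real.log (A N) ≤ Real.log (K * (N : ℝ) ^ σ) :=
          Real.log_le_log hA (hN.trans (by gcongr; exact le_max_left _ _))
      _ = Real.log K + σ * Real.log N := by
          rw [Real.log_mul (by positivity) (by positivity), Real.log_rpow hN0]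
      _ ≤ Real.log K + σ * Real.log x := by gcongr
  calc Real.log (A N) / Real.log x ≤ (Real.log K + σ * Real.log x) / Real.log x := by gcongr
    _ = σ + Real.log K / Real.log x := by field_simp; ring
    _ ≤ τ := hxτ.le

theorem summable_abs_rpow_neg_sub_mul_of_le_rpow (hA0 : ∀ N, 0 ≤ A N) (hσ : 0 ≤ σ)
    (hρσ : ρ < σ) (hA : ∀ᶠ n : ℕ in atTop, A (n + 1) ≤ ((n : ℝ) + 1) ^ ρ) :
    Summable fun n : ℕ =>
      |(((n + 1 : ℕ) : ℝ) + 1) ^ (-σ) - ((n : ℝ) + 1) ^ (-σ)| * A (n + 1) := by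
  refine Summable.of_norm_bounded_eventually
    ((summable_natCast_add_one_rpow (p := ρ - σ - 1) (by linarith)).mul_left σ) ?_
  rw [Nat.cofinite_eq_atTop]
  filter_upwards [hA] with n hn
  have hx : (0 : ℝ) < n + 1 := by positivity
  have hdiff : |(((n + 1 : ℕ) : ℝ) + 1) ^ (-σ) - ((n : ℝ) + 1) ^ (-σ)|
      ≤ σ * ((n : ℝ) + 1) ^ (-σ - 1) := by
    rw [abs_sub_comm, abs_of_nonneg (sub_nonneg.2 (Real.rpow_le_rpow_of_nonpos hx
      (by push_cast; linarith) (by linarith)))]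
    push_cast
    exact Real.rpow_neg_sub_rpow_neg_add_one_le hσ hx
  rw [Real.norm_of_nonneg (mul_nonneg (abs_nonneg _) (hA0 _))]
  calc _ ≤ σ * ((n : ℝ) + 1) ^ (-σ - 1) * ((n : ℝ) + 1) ^ ρ :=
        mul_le_mul hdiff hn (hA0 _) (by positivity)
    _ = σ * ((n : ℝ) + 1) ^ (ρ - σ - 1) := by
        rw [mul_assoc, ← Real.rpow_add hx]
        ring_nf

theorem tendsto_abs_rpow_neg_mul_of_le_rpow (hA0 : ∀ N, 0 ≤ A N) (hρσ : ρ < σ)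
    (hA : ∀ᶠ n : ℕ in atTop, A (n + 1) ≤ ((n : ℝ) + 1) ^ ρ) :
    Tendsto (fun n : ℕ => |((n : ℝ) + 1) ^ (-σ)| * A (n + 1)) atTop (𝓝 0) := by
  refine squeeze_zero' (Eventually.of_forall fun n => mul_nonneg (abs_nonneg _) (hA0 _)) ?_
    (tendsto_natCast_add_one_rpow_atTop_zero (sub_neg.2 hρσ))
  filter_upwards [hA] with n hn
  calc _ ≤ ((n : ℝ) + 1) ^ (-σ) * ((n : ℝ) + 1) ^ ρ := by
        rw [abs_of_nonneg (by positivity)]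
        gcongr
    _ = ((n : ℝ) + 1) ^ (ρ - σ) := by
        rw [← Real.rpow_add (by positivity)]
        ring_nf

end Growth

section DirichletSeries

open Complex

variable {a : ℕ → ℂ}

theorem dirichletPartial_eq_sum_smul (a : ℕ → ℂ) (s : ℂ) (r : ℝ) (N : ℕ) :
    dirichletPartial a s N =
      ∑ n ∈ range N, ((n : ℝ) + 1) ^ r • (a (n + 1) / ((n : ℂ) + 1) ^ (s + r)) := by
  refine sum_congr rfl fun n _ => ?_
  have hn : (n : ℂ) + 1 ≠ 0 := by exact_mod_cast n.succ_ne_zero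
  rw [real_smul, ofReal_cpow (by positivity), cpow_add _ _ hn]
  push_cast
  field_simp

theorem norm_dirichletPartial_le (a : ℕ → ℂ) (s : ℂ) (N : ℕ) :
    ‖dirichletPartial a s N‖ ≤ ∑ n ∈ range N, ‖a (n + 1)‖ / ((n : ℝ) + 1) ^ s.re := by
  refine (norm_sum_le _ _).trans (sum_le_sum fun n _ => le_of_eq ?_)
  have := norm_natCast_cpow_of_pos n.succ_pos s
  push_cast at this
  rw [norm_div, this]

noncomputable def dirichletPartialSup (a : ℕ → ℂ) (N : ℕ) : ℝ :=
  ⨆ t : ℝ, ‖dirichletPartial a ((t : ℂ) * I) N‖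

theorem norm_dirichletPartial_le_sup (a : ℕ → ℂ) (N : ℕ) (t : ℝ) :
    ‖dirichletPartial a ((t : ℂ) * I) N‖ ≤ dirichletPartialSup a N := by
  refine le_ciSup (f := fun t : ℝ => ‖dirichletPartial a ((t : ℂ) * I) N‖)
    ⟨∑ n ∈ range N, ‖a (n + 1)‖, ?_⟩ t
  rintro _ ⟨t, rfl⟩
  simpa using norm_dirichletPartial_le a ((t : ℂ) * I) N

theorem dirichletPartialSup_nonneg (a : ℕ → ℂ) (N : ℕ) : 0 ≤ dirichletPartialSup a N :=
  (norm_nonneg _).trans (norm_dirichletPartial_le_sup a N 0)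

theorem DirichletConvergesAt.mono_s9 {σ τ : ℝ} (h : DirichletConvergesAt a σ) (hστ : σ ≤ τ) :
    DirichletConvergesAt a τ := by
  rcases hστ.eq_or_lt with rfl | hlt
  · exact h
  obtain ⟨l, hl⟩ := h
  obtain ⟨b, hb⟩ := hl.norm.bddAbove_range
  have hcauchy := Antitone.cauchySeq_series_mul_of_tendsto_zero_of_bounded
    (f := fun n => ((n : ℝ) + 1) ^ (σ - τ)) (z := fun n => a (n + 1) / ((n : ℂ) + 1) ^ (σ : ℂ))
    (fun m n hmn => Real.rpow_le_rpow_of_nonpos (by positivity) (by gcongr) (by linarith))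
    (tendsto_natCast_add_one_rpow_atTop_zero (by linarith)) (fun n => hb ⟨n, rfl⟩)
  obtain ⟨l', hl'⟩ := cauchySeq_tendsto_of_complete hcauchy
  refine ⟨l', ?_⟩
  have hsum : dirichletPartial a τ = fun N => ∑ n ∈ range N,
      ((n : ℝ) + 1) ^ (σ - τ) • (a (n + 1) / ((n : ℂ) + 1) ^ (σ : ℂ)) := by
    ext N
    rw [dirichletPartial_eq_sum_smul a τ (σ - τ), ofReal_sub, add_sub_cancel]
  rwa [hsum]

theorem DirichletConvergesUniformlyAt.dirichletConvergesAt {σ : ℝ}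
    (h : DirichletConvergesUniformlyAt a σ) : DirichletConvergesAt a σ := by
  obtain ⟨g, hg⟩ := h
  exact ⟨g 0, by simpa using hg.tendsto_at 0⟩

theorem DirichletConvergesUniformlyAt.pos {σ : ℝ} (h0 : ¬ DirichletConvergesAt a 0)
    (h : DirichletConvergesUniformlyAt a σ) : 0 < σ :=
  lt_of_not_ge fun hσ => h0 (h.dirichletConvergesAt.mono_s9 hσ)

theorem DirichletConvergesUniformlyAt.exists_forall_norm_le {σ : ℝ}
    (h : DirichletConvergesUniformlyAt a σ) :
    ∃ C, ∀ N (t : ℝ), ‖dirichletPartial a ((σ : ℂ) + (t : ℂ) * I) N‖ ≤ C := by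
  obtain ⟨g, hg⟩ := h
  exact hg.exists_forall_norm_le fun N => ⟨∑ n ∈ range N, ‖a (n + 1)‖ / ((n : ℝ) + 1) ^ σ,
    fun t => by simpa using norm_dirichletPartial_le a ((σ : ℂ) + (t : ℂ) * I) N⟩

theorem dirichletPartialSup_le_of_forall_norm_le {σ C : ℝ} (hσ : 0 ≤ σ)
    (hC : ∀ N (t : ℝ), ‖dirichletPartial a ((σ : ℂ) + (t : ℂ) * I) N‖ ≤ C) (N : ℕ) :
    dirichletPartialSup a N ≤ 2 * C * (N : ℝ) ^ σ := by
  cases N with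
  | zero =>
    have hC0 : 0 ≤ C := (norm_nonneg _).trans (hC 0 0)
    simp only [dirichletPartialSup, dirichletPartial, range_zero, sum_empty, norm_zero,
      ciSup_const]
    positivity
  | succ N =>
    refine ciSup_le fun t => ?_
    rw [dirichletPartial_eq_sum_smul a _ σ]
    push_cast
    refine norm_sum_range_succ_smul_le_of_monotone
      (fun m n hmn => Real.rpow_le_rpow (by positivity) (by gcongr) hσ) (by positivity)
      (fun k => ?_) N
    rw [add_comm]
    exact hC k t

theorem dirichletConvergesUniformlyAt_of_sup_le_rpow {ρ σ : ℝ} (hσ : 0 ≤ σ) (hρσ : ρ < σ)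
    (hA : ∀ᶠ N : ℕ in atTop, dirichletPartialSup a N ≤ (N : ℝ) ^ ρ) :
    DirichletConvergesUniformlyAt a σ := by
  have hA' : ∀ᶠ n : ℕ in atTop, dirichletPartialSup a (n + 1) ≤ ((n : ℝ) + 1) ^ ρ := by
    simpa using (tendsto_add_atTop_nat 1).eventually hA
  have hA0 := dirichletPartialSup_nonneg a
  obtain ⟨g, hg⟩ := exists_tendstoUniformly_sum_range_smul
    (f := fun n => ((n : ℝ) + 1) ^ (-σ))
    (z := fun n (t : ℝ) => a (n + 1) / ((n : ℂ) + 1) ^ ((t : ℂ) * I))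
    (norm_dirichletPartial_le_sup a)
    (summable_abs_rpow_neg_sub_mul_of_le_rpow hA0 hσ hρσ hA')
    (tendsto_abs_rpow_neg_mul_of_le_rpow hA0 hρσ hA')
  refine ⟨g, ?_⟩
  have hsum : (fun N (t : ℝ) => dirichletPartial a ((σ : ℂ) + (t : ℂ) * I) N) =
      fun N (t : ℝ) => ∑ n ∈ range N,
        ((n : ℝ) + 1) ^ (-σ) • (a (n + 1) / ((n : ℂ) + 1) ^ ((t : ℂ) * I)) := by
    ext N t
    rw [dirichletPartial_eq_sum_smul a _ (-σ), ofReal_neg, add_neg_cancel_comm]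
  rwa [hsum]

end DirichletSeries

/-- Cauchy–Hadamard formula for the abscissa of uniform convergence,
assuming that the Dirichlet series does not converge at `s = 0`. -/
theorem sigmaB_cauchy_hadamard (a : ℕ → ℂ)
    (h : ¬ DirichletConvergesAt a 0) :
    sigmaB a =
      limsup (fun x : ℝ =>
        Real.log (⨆ t : ℝ, ‖dirichletPartial a ((t : ℂ) * Complex.I) ⌊x⌋₊‖) /
          Real.log x) atTop := by
  rw [limsup_eq]
  refine Real.sInf_eq_sInf_of_forall_lt_mem (fun σ hσ τ hστ => ?_) (fun ρ hρ σ hρσ => ?_)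
  · have hσ : DirichletConvergesUniformlyAt a σ := hσ
    have hσ0 := (hσ.pos h).le
    obtain ⟨C, hC⟩ := hσ.exists_forall_norm_le
    exact eventually_log_div_log_le_of_le_rpow (dirichletPartialSup_nonneg a) hσ0 hστ
      (Eventually.of_forall (dirichletPartialSup_le_of_forall_norm_le hσ0 hC))
  · have hA := eventually_le_rpow_of_log_div_log_le (A := dirichletPartialSup a) hρ
    have hρ0 : 0 ≤ ρ := le_of_not_gt fun hρ0 =>
      ((dirichletConvergesUniformlyAt_of_sup_le_rpow le_rfl hρ0 hA).pos h).false
    exact dirichletConvergesUniformlyAt_of_sup_le_rpow (hρ0.trans hρσ.le) hρσ hA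
end

section
/- Fix α with 0 < α < 1, let χ be the (unique) non-principal Dirichlet character modulo 3, and let a : ℕ → ℂ be the coefficients of the Dirichlet series product f(s) = (1 − 3^{1−α−s})^{-1} · L(s, χ), i.e. a_n = Σ_{3^k m = n} 3^{(1−α)k} χ(m). Then a is completely multiplicative, σ_c(f) = 1 − α, and σ_a(f) = 1; in particular σ_a(f) − σ_c(f) = α. -/
open Filter Topology

/-!
Write `n = p^k m` with `p ∤ m` (here `p = 3`). Then `a(n) = χ(n)` for `p ∤ n` and
`a(pm) = p^{1-α} a(m)`, so the partial sums `S(N)` of `∑ a_n n^{-σ}` satisfy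
`S(N) = L(N) + p^{1-α-σ} S(⌊N/p⌋)`, where `L(N)` are the partial sums of `L(σ, χ)`. Unrolling,
`S(N) = ∑_k p^{(1-α-σ)k} L(⌊N/p^k⌋)`; for `σ > 1 - α` dominated convergence gives
`S(N) → (1 - p^{1-α-σ})⁻¹ L(σ, χ)`, the L-series converging for `σ > 0` by Dirichlet's test.
For `σ < 1 - α` the terms at `n = p^k` have norm `p^{(1-α-σ)k} ≥ 1`. Finally
`|a_n| n^{-σ} = p^{(1-α-σ)k} m^{-σ}` is dominated by a geometric series times `ζ(σ)`, while
`|a_n| ≥ 1` forces absolute divergence for `σ ≤ 1`.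
-/

open Finset

theorem dirichletPartial_eq_sum_term (a : ℕ → ℂ) (s : ℂ) (N : ℕ) :
    dirichletPartial a s N = ∑ n ∈ range (N + 1), LSeries.term a s n := by
  simp [dirichletPartial, sum_range_succ']

theorem dirichletConvergesAt_iff_tendsto_sum_term (a : ℕ → ℂ) (σ : ℝ) :
    DirichletConvergesAt a σ ↔
      ∃ l, Tendsto (fun N => ∑ n ∈ range (N + 1), LSeries.term a σ n) atTop (𝓝 l) := by
  rw [DirichletConvergesAt, funext (dirichletPartial_eq_sum_term a σ)]

theorem dirichletAbsConvergesAt_iff_LSeriesSummable (a : ℕ → ℂ) (σ : ℝ) :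
    DirichletAbsConvergesAt a σ ↔ LSeriesSummable a σ := by
  rw [LSeriesSummable, ← summable_norm_iff, ← summable_nat_add_iff 1, DirichletAbsConvergesAt]
  simp only [LSeries.norm_term_eq, Nat.add_one_ne_zero, if_false, Complex.ofReal_re]
  push_cast
  rfl

theorem DirichletConvergesAt.tendsto_term {a : ℕ → ℂ} {σ : ℝ} (h : DirichletConvergesAt a σ) :
    Tendsto (LSeries.term a σ) atTop (𝓝 0) := by
  obtain ⟨l, hl⟩ := (dirichletConvergesAt_iff_tendsto_sum_term a σ).mp h
  rw [← tendsto_add_atTop_iff_nat 1]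
  simpa [sum_range_succ _ (_ + 1)] using (hl.comp (tendsto_add_atTop_nat 1)).sub hl

theorem Real.sInf_eq_of_Ioi_subset_of_subset_Ici {S : Set ℝ} {c : ℝ} (hIoi : Set.Ioi c ⊆ S)
    (hIci : S ⊆ Set.Ici c) : sInf S = c :=
  csInf_eq_of_forall_ge_of_forall_gt_exists_lt ⟨c + 1, hIoi (by simp)⟩ hIci
    fun w hw => ⟨(c + w) / 2, hIoi (by simp only [Set.mem_Ioi]; linarith), by linarith⟩

theorem Function.Periodic.sum_range_eq_sum_range_mod {M : Type*} [AddCommMonoid M]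
    {f : ℕ → M} {q : ℕ} (hf : Function.Periodic f q) (hq : ∑ n ∈ range q, f n = 0) (N : ℕ) :
    ∑ n ∈ range N, f n = ∑ n ∈ range (N % q), f n := by
  have hshift (k n : ℕ) : f (q * k + n) = f n := by
    rw [add_comm, mul_comm]; exact hf.nat_mul k n
  have hblocks (k : ℕ) : ∑ n ∈ range (q * k), f n = 0 := by
    induction k with
    | zero => simp
    | succ k ih => simp only [mul_add_one, sum_range_add, ih, hshift, hq, add_zero]
  conv_lhs => rw [← Nat.div_add_mod N q]
  simp only [sum_range_add, hblocks, hshift, zero_add]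

namespace DirichletCharacter

variable {q : ℕ} [NeZero q]

theorem sum_range_eq_zero {R : Type*} [CommRing R] [IsDomain R] {χ : DirichletCharacter R q}
    (hχ : χ ≠ 1) : ∑ n ∈ range q, χ n = 0 := by
  rw [← χ.sum_eq_zero_of_ne_one hχ]
  refine sum_nbij' (fun n => (n : ZMod q)) ZMod.val (by simp) (fun a _ => by simp [ZMod.val_lt])
    (fun n hn => ZMod.val_cast_of_lt (mem_range.mp hn)) (fun a _ => by simp) (fun _ _ => rfl)

theorem norm_sum_range_le {χ : DirichletCharacter ℂ q} (hχ : χ ≠ 1) (N : ℕ) :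
    ‖∑ n ∈ range N, χ n‖ ≤ q := by
  have hper : Function.Periodic (fun n : ℕ => χ n) q := fun n => by simp
  rw [hper.sum_range_eq_sum_range_mod (sum_range_eq_zero hχ)]
  calc ‖∑ n ∈ range (N % q), χ n‖ ≤ ∑ n ∈ range (N % q), ‖χ n‖ := norm_sum_le _ _
    _ ≤ ∑ n ∈ range (N % q), (1 : ℝ) := sum_le_sum fun n _ => χ.norm_le_one n
    _ ≤ q := by simpa using (Nat.mod_lt N (NeZero.pos q)).le

theorem dirichletConvergesAt {χ : DirichletCharacter ℂ q} (hχ : χ ≠ 1) {σ : ℝ} (hσ : 0 < σ) :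
    DirichletConvergesAt (fun n => χ n) σ := by
  have hpartial (N : ℕ) : dirichletPartial (fun n => χ n) σ N =
      ∑ n ∈ range N, (((n : ℝ) + 1) ^ (-σ)) • χ ((n + 1 : ℕ) : ZMod q) := by
    refine sum_congr rfl fun n _ => ?_
    have h := Complex.ofReal_cpow (x := (n : ℝ) + 1) (by positivity) σ
    push_cast at h
    rw [Complex.real_smul, Real.rpow_neg (by positivity), Complex.ofReal_inv, h, div_eq_inv_mul]
  have hbound (N : ℕ) : ‖∑ n ∈ range N, χ ((n + 1 : ℕ) : ZMod q)‖ ≤ q + 1 := by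
    have h := sum_range_succ' (fun n : ℕ => χ n) N
    rw [eq_sub_of_add_eq h.symm]
    exact (norm_sub_le _ _).trans (add_le_add (norm_sum_range_le hχ _) (χ.norm_le_one _))
  have hanti : Antitone fun n : ℕ => ((n : ℝ) + 1) ^ (-σ) := fun m n hmn =>
    Real.rpow_le_rpow_of_nonpos (by positivity) (by gcongr) (by linarith)
  have hzero : Tendsto (fun n : ℕ => ((n : ℝ) + 1) ^ (-σ)) atTop (𝓝 0) :=
    (tendsto_rpow_neg_atTop hσ).comp (tendsto_natCast_atTop_atTop.atTop_add tendsto_const_nhds)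
  rw [DirichletConvergesAt, funext hpartial]
  exact cauchySeq_tendsto_of_complete (hanti.cauchySeq_series_mul_of_tendsto_zero_of_bounded
    hzero hbound)

end DirichletCharacter

theorem sum_range_succ_eq_add_mul_sum_range_div {R : Type*} [Semiring R] {t u : ℕ → R} {q : ℕ}
    {ρ : R} (hcoprime : ∀ n, ¬ q ∣ n → t n = u n) (hmul : ∀ m, t (q * m) = ρ * t m)
    (hu : ∀ m, u (q * m) = 0) (N : ℕ) :
    ∑ n ∈ range (N + 1), t n = ∑ n ∈ range (N + 1), u n + ρ * ∑ m ∈ range (N / q + 1), t m := by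
  induction N with
  | zero => simpa [show u 0 = 0 by simpa using hu 0] using hmul 0
  | succ N ih =>
    rw [sum_range_succ t (N + 1), ih, sum_range_succ u (N + 1), Nat.succ_div (a := N) (b := q)]
    by_cases hdvd : q ∣ N + 1
    · obtain ⟨j, hj⟩ := hdvd
      have hq : 0 < q := Nat.pos_of_ne_zero (by rintro rfl; simp at hj)
      have hjN : N / q + 1 = j := by
        have := Nat.succ_div (a := N) (b := q)
        rwa [if_pos ⟨j, hj⟩, hj, Nat.mul_div_cancel_left j hq, eq_comm] at this
      rw [if_pos ⟨j, hj⟩, sum_range_succ _ (N / q + 1), hjN, hj, hmul, hu, mul_add]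
      abel
    · rw [if_neg hdvd, add_zero, hcoprime _ hdvd]
      abel

theorem eq_sum_range_pow_mul_add_pow_mul {R : Type*} [Semiring R] {S L : ℕ → R} {q : ℕ} {ρ : R}
    (h : ∀ N, S N = L N + ρ * S (N / q)) (N K : ℕ) :
    S N = ∑ k ∈ range K, ρ ^ k * L (N / q ^ k) + ρ ^ K * S (N / q ^ K) := by
  induction K with
  | zero => simp
  | succ K ih =>
    rw [ih, h (N / q ^ K), Nat.div_div_eq_div_mul, ← pow_succ, sum_range_succ, mul_add,
      ← mul_assoc, ← pow_succ, add_assoc]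

theorem tendsto_of_eq_add_mul_comp_div {𝕜 : Type*} [NormedField 𝕜] [CompleteSpace 𝕜]
    {S L : ℕ → 𝕜} {q : ℕ} {ρ ℓ : 𝕜} (hq : 1 < q) (hρ : ‖ρ‖ < 1) (hS : S 0 = 0)
    (h : ∀ N, S N = L N + ρ * S (N / q)) (hL : Tendsto L atTop (𝓝 ℓ)) :
    Tendsto S atTop (𝓝 ((1 - ρ)⁻¹ * ℓ)) := by
  have hL0 : L 0 = 0 := by simpa [hS] using (h 0).symm
  obtain ⟨B, hB⟩ := isBounded_iff_forall_norm_le.mp (Metric.isBounded_range_of_tendsto L hL)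
  have hS_tsum (N : ℕ) : S N = ∑' k, ρ ^ k * L (N / q ^ k) := by
    have hsmall {k : ℕ} (hk : N ≤ k) : N / q ^ k = 0 :=
      Nat.div_eq_of_lt ((Nat.lt_pow_self hq).trans_le (Nat.pow_le_pow_right (by omega) hk))
    rw [eq_sum_range_pow_mul_add_pow_mul h N N, hsmall le_rfl, hS, mul_zero, add_zero,
      tsum_eq_sum (s := range N) fun k hk => by rw [hsmall (by simpa using hk), hL0, mul_zero]]
  rw [funext hS_tsum, ← tsum_geometric_of_norm_lt_one hρ, ← tsum_mul_right]
  refine tendsto_tsum_of_dominated_convergence (bound := fun k => ‖ρ‖ ^ k * B)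
    ((summable_geometric_of_lt_one (norm_nonneg _) hρ).mul_right B)
    (fun k => (hL.comp (Nat.tendsto_div_const_atTop (by positivity))).const_mul _)
    (Eventually.of_forall fun N k => ?_)
  rw [norm_mul, norm_pow]
  gcongr
  exact hB _ ⟨_, rfl⟩

/-- `a` is the coefficient sequence of `(1 - p^{1-α-s})⁻¹ L(s, χ)`. -/
def IsGeometricMulLSeriesCoeff (p : ℕ) (α : ℝ) (χ : DirichletCharacter ℂ p) (a : ℕ → ℂ) : Prop :=
  ∀ k m : ℕ, ¬ p ∣ m → a (p ^ k * m) = (((p : ℝ) ^ ((1 - α) * (k : ℝ)) : ℝ) : ℂ) * χ (m : ZMod p)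

namespace IsGeometricMulLSeriesCoeff

variable {p : ℕ} {α σ : ℝ} {χ : DirichletCharacter ℂ p} {a : ℕ → ℂ}

theorem apply_of_not_dvd (ha : IsGeometricMulLSeriesCoeff p α χ a) {n : ℕ} (hn : ¬ p ∣ n) :
    a n = χ n := by
  simpa using ha 0 n hn

variable [hp : Fact p.Prime]

theorem isCompletelyMultiplicativeFun (ha : IsGeometricMulLSeriesCoeff p α χ a) :
    IsCompletelyMultiplicativeFun a := by
  refine ⟨by simpa using ha.apply_of_not_dvd hp.out.not_dvd_one, fun m n hm hn => ?_⟩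
  obtain ⟨k, u, hu, rfl⟩ : ∃ k u, ¬ p ∣ u ∧ p ^ k * u = m :=
    ⟨_, _, Nat.not_dvd_ordCompl hp.out (by omega), Nat.ordProj_mul_ordCompl_eq_self m p⟩
  obtain ⟨l, v, hv, rfl⟩ : ∃ l v, ¬ p ∣ v ∧ p ^ l * v = n :=
    ⟨_, _, Nat.not_dvd_ordCompl hp.out (by omega), Nat.ordProj_mul_ordCompl_eq_self n p⟩
  have huv : ¬ p ∣ u * v := fun h => (hp.out.dvd_mul.mp h).elim hu hv
  rw [show p ^ k * u * (p ^ l * v) = p ^ (k + l) * (u * v) by ring, ha _ _ huv, ha _ _ hu,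
    ha _ _ hv, Nat.cast_add, mul_add, Real.rpow_add (by exact_mod_cast hp.out.pos), Nat.cast_mul,
    map_mul]
  push_cast
  ring

theorem norm_apply (ha : IsGeometricMulLSeriesCoeff p α χ a) {n : ℕ} (hn : n ≠ 0) :
    ‖a n‖ = (p : ℝ) ^ ((1 - α) * (n.factorization p : ℝ)) := by
  have hu := Nat.not_dvd_ordCompl hp.out hn
  have hunit : IsUnit ((ordCompl[p] n : ℕ) : ZMod p) :=
    (ZMod.isUnit_iff_coprime _ _).mpr ((hp.out.coprime_iff_not_dvd.mpr hu).symm)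
  conv_lhs => rw [← Nat.ordProj_mul_ordCompl_eq_self n p]
  rw [ha _ _ hu, norm_mul, ← hunit.unit_spec, DirichletCharacter.unit_norm_eq_one, mul_one,
    Complex.norm_real, Real.norm_of_nonneg (by positivity)]

theorem one_le_norm_apply (ha : IsGeometricMulLSeriesCoeff p α χ a) (hα : α ≤ 1) {n : ℕ}
    (hn : n ≠ 0) : 1 ≤ ‖a n‖ := by
  rw [ha.norm_apply hn]
  exact Real.one_le_rpow (by exact_mod_cast hp.out.one_lt.le)
    (mul_nonneg (by linarith) (Nat.cast_nonneg _))

theorem not_LSeriesSummable (ha : IsGeometricMulLSeriesCoeff p α χ a) (hα : α ≤ 1)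
    (hσ : σ ≤ 1) : ¬ LSeriesSummable a σ := by
  intro hsum
  have hone : LSeriesSummable 1 σ := (summable_norm_iff.mpr hsum).of_norm_bounded fun n => by
    rcases eq_or_ne n 0 with rfl | hn
    · simp
    · exact LSeries.norm_term_le _ (by simpa using ha.one_le_norm_apply hα hn)
  have h1 : 1 < σ := by simpa using LSeriesSummable_one_iff.mp hone
  linarith

theorem norm_term (ha : IsGeometricMulLSeriesCoeff p α χ a) (σ : ℝ) {n : ℕ} (hn : n ≠ 0) :
    ‖LSeries.term a σ n‖ =
      ((p : ℝ) ^ (1 - α - σ)) ^ n.factorization p * ((ordCompl[p] n : ℕ) : ℝ) ^ (-σ) := by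
  have hp0 : (0 : ℝ) < p := by exact_mod_cast hp.out.pos
  have hn' : (n : ℝ) = (p : ℝ) ^ n.factorization p * (ordCompl[p] n : ℕ) := by
    exact_mod_cast (Nat.ordProj_mul_ordCompl_eq_self n p).symm
  rw [LSeries.norm_term_eq, if_neg hn, ha.norm_apply hn, Complex.ofReal_re, hn']
  generalize n.factorization p = k
  have hpk : ((p : ℝ) ^ k) ^ σ = (p : ℝ) ^ (k * σ) := by
    rw [← Real.rpow_natCast, ← Real.rpow_mul hp0.le]
  have hρk : ((p : ℝ) ^ (1 - α - σ)) ^ k = (p : ℝ) ^ ((1 - α) * k) / (p : ℝ) ^ (k * σ) := by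
    rw [← Real.rpow_mul_natCast hp0.le, ← Real.rpow_sub hp0]
    ring_nf
  rw [Real.mul_rpow (by positivity) (by positivity), hpk, hρk, Real.rpow_neg (Nat.cast_nonneg _)]
  ring

theorem LSeriesSummable (ha : IsGeometricMulLSeriesCoeff p α χ a) (hσ : 1 < σ)
    (hασ : 1 - α < σ) : LSeriesSummable a σ := by
  have hρ : (p : ℝ) ^ (1 - α - σ) < 1 :=
    Real.rpow_lt_one_of_one_lt_of_neg (by exact_mod_cast hp.out.one_lt) (by linarith)
  have hprod : Summable fun x : ℕ × ℕ => ((p : ℝ) ^ (1 - α - σ)) ^ x.1 * (x.2 : ℝ) ^ (-σ) :=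
    (summable_geometric_of_lt_one (by positivity) hρ).mul_of_nonneg
      (Real.summable_nat_rpow.mpr (by linarith)) (fun _ => by positivity) (fun _ => by positivity)
  have hinj : Function.Injective fun n : ℕ => (n.factorization p, ordCompl[p] n) := fun m n h => by
    obtain ⟨hfac, hcompl⟩ := Prod.mk.inj h
    rw [← Nat.ordProj_mul_ordCompl_eq_self m p, ← Nat.ordProj_mul_ordCompl_eq_self n p, hcompl,
      hfac]
  refine Summable.of_norm (Summable.of_nonneg_of_le (fun _ => norm_nonneg _) (fun n => ?_)
    (hprod.comp_injective hinj))
  rcases eq_or_ne n 0 with rfl | hn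
  · simp
    positivity
  · exact (ha.norm_term σ hn).le

theorem not_dirichletConvergesAt (ha : IsGeometricMulLSeriesCoeff p α χ a) (hσ : σ < 1 - α) :
    ¬ DirichletConvergesAt a σ := by
  intro h
  have hρ : 1 ≤ (p : ℝ) ^ (1 - α - σ) :=
    Real.one_le_rpow (by exact_mod_cast hp.out.one_lt.le) (by linarith)
  have hlarge (k : ℕ) : 1 ≤ ‖LSeries.term a σ (p ^ k)‖ := by
    rw [ha.norm_term σ (pow_ne_zero k hp.out.ne_zero)]
    simpa [Nat.factorization_pow, hp.out.factorization_self] using one_le_pow₀ hρ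
  have hzero := (h.tendsto_term.comp (tendsto_pow_atTop_atTop_of_one_lt hp.out.one_lt)).norm
  exact absurd (ge_of_tendsto' hzero hlarge) (by simp)

theorem term_prime_mul (ha : IsGeometricMulLSeriesCoeff p α χ a) (σ : ℝ) (m : ℕ) :
    LSeries.term a σ (p * m) = (((p : ℝ) ^ (1 - α - σ) : ℝ) : ℂ) * LSeries.term a σ m := by
  rcases eq_or_ne m 0 with rfl | hm
  · simp
  have hp0 : (0 : ℝ) < p := by exact_mod_cast hp.out.pos
  have hap : a p = (((p : ℝ) ^ (1 - α) : ℝ) : ℂ) := by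
    simpa using ha 1 1 hp.out.not_dvd_one
  rw [LSeries.term_of_ne_zero (mul_ne_zero hp.out.ne_zero hm), LSeries.term_of_ne_zero hm,
    ha.isCompletelyMultiplicativeFun.2 p m hp.out.pos (by omega), hap, Nat.cast_mul,
    Complex.natCast_mul_natCast_cpow, Real.rpow_sub hp0 (1 - α) σ, Complex.ofReal_div,
    Complex.ofReal_cpow hp0.le σ, Complex.ofReal_natCast]
  ring

theorem dirichletConvergesAt (ha : IsGeometricMulLSeriesCoeff p α χ a) (hχ : χ ≠ 1)
    (hα : α < 1) (hσ : 1 - α < σ) : DirichletConvergesAt a σ := by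
  obtain ⟨ℓ, hℓ⟩ := (dirichletConvergesAt_iff_tendsto_sum_term _ σ).mp
    (DirichletCharacter.dirichletConvergesAt hχ (show 0 < σ by linarith))
  have hcoprime (n : ℕ) (hn : ¬ p ∣ n) :
      LSeries.term a σ n = LSeries.term (fun n => χ n) σ n := by
    simp only [LSeries.term_def, ha.apply_of_not_dvd hn]
  have hχ_mul (m : ℕ) : LSeries.term (fun n => χ n) σ (p * m) = 0 := by
    simp [LSeries.term_def, χ.map_zero]
  have hρ : ‖(((p : ℝ) ^ (1 - α - σ) : ℝ) : ℂ)‖ < 1 := by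
    rw [Complex.norm_real, Real.norm_of_nonneg (by positivity)]
    exact Real.rpow_lt_one_of_one_lt_of_neg (by exact_mod_cast hp.out.one_lt) (by linarith)
  exact (dirichletConvergesAt_iff_tendsto_sum_term a σ).mpr ⟨_,
    tendsto_of_eq_add_mul_comp_div hp.out.one_lt hρ (by simp)
      (sum_range_succ_eq_add_mul_sum_range_div hcoprime (ha.term_prime_mul σ) hχ_mul) hℓ⟩

end IsGeometricMulLSeriesCoeff

/-- For `0 < α < 1`, the coefficients of
`f(s) = (1 - 3^{1-α-s})⁻¹ L(s,χ)`, `χ` the non-principal character mod 3, are completely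
multiplicative with `σ_c(f) = 1 - α` and `σ_a(f) = 1`. -/
theorem geometric_times_L_abscissas (α : ℝ) (hα0 : 0 < α) (hα1 : α < 1)
    (χ : DirichletCharacter ℂ 3) (hχ : χ ≠ 1) (a : ℕ → ℂ)
    (ha : ∀ k m : ℕ, ¬ (3 ∣ m) →
      a (3 ^ k * m) = (((3 : ℝ) ^ ((1 - α) * (k : ℝ)) : ℝ) : ℂ) * χ (m : ZMod 3)) :
    IsCompletelyMultiplicativeFun a ∧ sigmaC a = 1 - α ∧ sigmaA a = 1 ∧
      sigmaA a - sigmaC a = α := by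
  have ha' : IsGeometricMulLSeriesCoeff 3 α χ a := fun k m hm => by simpa using ha k m hm
  have hC : sigmaC a = 1 - α := Real.sInf_eq_of_Ioi_subset_of_subset_Ici
    (fun σ hσ => ha'.dirichletConvergesAt hχ hα1 hσ)
    (fun σ hσ => not_lt.mp fun h => ha'.not_dirichletConvergesAt h hσ)
  have hA : sigmaA a = 1 := Real.sInf_eq_of_Ioi_subset_of_subset_Ici
    (fun σ hσ => (dirichletAbsConvergesAt_iff_LSeriesSummable a σ).mpr
      (ha'.LSeriesSummable hσ (by linarith [Set.mem_Ioi.mp hσ])))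
    (fun σ hσ => not_lt.mp fun h => ha'.not_LSeriesSummable hα1.le h.le
      ((dirichletAbsConvergesAt_iff_LSeriesSummable a σ).mp hσ))
  exact ⟨ha'.isCompletelyMultiplicativeFun, hC, hA, by rw [hA, hC]; ring⟩
end
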